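/- arXiv:1111.5648 — 3 statements merged into one kernel-verified Lean document; each statement's English description precedes it below -/
import Mathlib

section
/- The empirical VC-entropy equals l minus the effective information generated by the min-risk outputting 0: V(F,D) = l − ei(𝐑_{F,D}, 0). -/
open Classical Finset

/-- Empirical risk of `f` on data `D` with labels `L`. -/
noncomputable def empRisk {X : Type*} {l : ℕ} (f : X → Bool)
    (D : Fin l → X) (L : Fin l → Bool) : ℝ :=
  (1 / l : ℝ) * ∑ i, if f (D i) ≠ L i then (1 : ℝ) else 0

/-- The min-risk: the minimum of the empirical risk over the repertoire `F`,
with labels produced by supervisor `σ`. -/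
noncomputable def minRisk {X : Type*} {l : ℕ}
    (F : Finset (X → Bool)) (hF : F.Nonempty) (D : Fin l → X) (σ : X → Bool) : ℝ :=
  F.inf' hF (fun f => empRisk f D (fun i => σ (D i)))

/-- Effective information generated by a function `g` between finite sets
outputting `b`: `log₂ |domain| - log₂ |g⁻¹(b)|`. -/
noncomputable def ei {A B : Type*} [Fintype A] (g : A → B) (b : B) : ℝ :=
  Real.logb 2 (Fintype.card A) -
    Real.logb 2 ((Finset.univ.filter (fun a => g a = b)).card)

/-- Empirical VC-entropy of `F` on `D`: `log₂` of the number of distinct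
labelings of `D` realized by functions in `F`. -/
noncomputable def vcEntropy {X : Type*} {l : ℕ}
    (F : Finset (X → Bool)) (D : Fin l → X) : ℝ :=
  Real.logb 2 ((F.image (fun f => fun i => f (D i))).card)

lemma empRisk_nonneg {X : Type*} {l : ℕ} (f : X → Bool) (D : Fin l → X) (L : Fin l → Bool) :
    0 ≤ empRisk f D L := by
  unfold empRisk
  apply mul_nonneg (by positivity)
  apply Finset.sum_nonneg; intro i _; split <;> norm_num

lemma empRisk_eq_zero_iff {X : Type*} {l : ℕ} (hl : 1 ≤ l) (f : X → Bool)
    (D : Fin l → X) (L : Fin l → Bool) :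
    empRisk f D L = 0 ↔ ∀ i, f (D i) = L i := by
  have hl' : (0:ℝ) < l := by exact_mod_cast hl
  unfold empRisk
  rw [mul_eq_zero]
  have h1 : (1 / l : ℝ) ≠ 0 := by positivity
  simp only [h1, false_or]
  rw [Finset.sum_eq_zero_iff_of_nonneg (by intro i _; split <;> norm_num)]
  constructor
  · intro h i
    have := h i (Finset.mem_univ i)
    by_contra hc
    simp [hc] at this
  · intro h i _
    simp [h i]

lemma minRisk_eq_zero_iff {X : Type*} {l : ℕ} (hl : 1 ≤ l)
    (F : Finset (X → Bool)) (hF : F.Nonempty) (D : Fin l → X) (σ : X → Bool) :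
    minRisk F hF D σ = 0 ↔
      (fun i => σ (D i)) ∈ F.image (fun f => fun i => f (D i)) := by
  constructor
  · intro h
    obtain ⟨f, hfF, hfe⟩ := Finset.exists_mem_eq_inf' hF (fun f => empRisk f D (fun i => σ (D i)))
    rw [minRisk, hfe] at h
    rw [empRisk_eq_zero_iff hl] at h
    exact Finset.mem_image.2 ⟨f, hfF, by funext i; exact h i⟩
  · intro h
    obtain ⟨f, hfF, hfe⟩ := Finset.mem_image.1 h
    have h0 : empRisk f D (fun i => σ (D i)) = 0 := by
      rw [empRisk_eq_zero_iff hl]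
      intro i; exact congrFun hfe i
    have hle : minRisk F hF D σ ≤ 0 := h0 ▸ Finset.inf'_le _ hfF
    have hge : 0 ≤ minRisk F hF D σ :=
      Finset.le_inf' hF _ (fun f _ => empRisk_nonneg f D _)
    linarith

lemma card_filter_comp_mem {X : Type*} [Fintype X] {l : ℕ}
    (D : Fin l → X) (hD : Function.Injective D)
    (S : Finset (Fin l → Bool)) :
    (Finset.univ.filter (fun σ : X → Bool => (fun i => σ (D i)) ∈ S)).card
      = S.card * 2 ^ (Fintype.card X - l) := by
  classical
  let e : (X → Bool) ≃ ((Fin l → Bool) × ({x : X // x ∉ Set.range D} → Bool)) :=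
    (Equiv.arrowCongr (Equiv.sumCompl (· ∈ Set.range D)).symm (Equiv.refl Bool)).trans
      ((Equiv.sumArrowEquivProdArrow _ _ _).trans
        (Equiv.prodCongr (Equiv.arrowCongr (Equiv.ofInjective D hD) (Equiv.refl Bool)).symm
          (Equiv.refl _)))
  have he : ∀ σ : X → Bool, (e σ).1 = fun i => σ (D i) := by
    intro σ; funext i; simp [e, Equiv.sumCompl, Equiv.sumArrowEquivProdArrow, Equiv.ofInjective]
  have h1 : (Finset.univ.filter (fun σ : X → Bool => (fun i => σ (D i)) ∈ S)).card
      = (Finset.univ.filter (fun p : (Fin l → Bool) × ({x : X // x ∉ Set.range D} → Bool) => p.1 ∈ S)).card := by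
    apply Finset.card_bij (fun σ _ => e σ)
    · intro σ hσ; simp only [Finset.mem_filter, Finset.mem_univ, true_and] at hσ ⊢
      rw [he σ]; exact hσ
    · intro a _ b _ hab; exact e.injective hab
    · intro p hp
      refine ⟨e.symm p, ?_, by simp⟩
      simp only [Finset.mem_filter, Finset.mem_univ, true_and] at hp ⊢
      rw [← he (e.symm p)]; simpa using hp
  rw [h1]
  have h2 : (Finset.univ.filter (fun p : (Fin l → Bool) × ({x : X // x ∉ Set.range D} → Bool) => p.1 ∈ S))
      = S ×ˢ Finset.univ := by
    ext p; simp [Finset.mem_product]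
  rw [h2, Finset.card_product]
  congr 1
  simp only [Finset.card_univ, Fintype.card_fun, Fintype.card_bool]
  congr 1
  rw [Fintype.card_subtype_compl]
  congr 1
  have := Fintype.card_congr (Equiv.ofInjective D hD)
  rw [Fintype.card_fin] at this
  exact this.symm

/-- Empirical VC-entropy equals `l` minus the effective information generated
by the min-risk outputting `0`. -/
theorem vcEntropy_eq_l_sub_ei_minRisk
    {X : Type*} [Fintype X] [Nonempty X] {l : ℕ} (hl : 1 ≤ l)
    (F : Finset (X → Bool)) (hF : F.Nonempty)
    (D : Fin l → X) (hD : Function.Injective D) :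
    vcEntropy F D = (l : ℝ) - ei (minRisk F hF D) 0 := by
  classical
  set S := F.image (fun f => fun i => f (D i)) with hS
  have hSne : S.Nonempty := hF.image _
  have hfilter : (Finset.univ.filter (fun σ : X → Bool => minRisk F hF D σ = 0))
      = Finset.univ.filter (fun σ : X → Bool => (fun i => σ (D i)) ∈ S) := by
    ext σ
    simp only [Finset.mem_filter, Finset.mem_univ, true_and]
    exact minRisk_eq_zero_iff hl F hF D σ
  have hcard : (Finset.univ.filter (fun σ : X → Bool => minRisk F hF D σ = 0)).card
      = S.card * 2 ^ (Fintype.card X - l) := by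
    rw [hfilter]; exact card_filter_comp_mem D hD S
  have hln : l ≤ Fintype.card X := by
    have := Fintype.card_le_of_injective D hD
    simpa using this
  have hNpos : (0:ℝ) < (S.card : ℝ) := by exact_mod_cast hSne.card_pos
  unfold ei
  rw [hcard]
  have hdom : (Fintype.card (X → Bool) : ℝ) = (2:ℝ) ^ (Fintype.card X) := by
    rw [Fintype.card_fun, Fintype.card_bool]; push_cast; ring
  rw [hdom]
  have hlog1 : Real.logb 2 ((2:ℝ) ^ (Fintype.card X)) = (Fintype.card X : ℝ) := by
    rw [Real.logb_pow, Real.logb_self_eq_one (by norm_num : (1:ℝ) < 2)]; ring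
  have hcast : ((S.card * 2 ^ (Fintype.card X - l) : ℕ) : ℝ)
      = (S.card : ℝ) * (2:ℝ) ^ (Fintype.card X - l) := by push_cast; ring
  rw [hcast]
  have hlog2 : Real.logb 2 ((S.card : ℝ) * (2:ℝ) ^ (Fintype.card X - l))
      = Real.logb 2 (S.card : ℝ) + ((Fintype.card X - l : ℕ) : ℝ) := by
    rw [Real.logb_mul (ne_of_gt hNpos) (by positivity),
      Real.logb_pow, Real.logb_self_eq_one (by norm_num : (1:ℝ) < 2)]
    ring
  rw [hlog1, hlog2]
  have hsub : ((Fintype.card X - l : ℕ) : ℝ) = (Fintype.card X : ℝ) - l := by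
    exact Nat.cast_sub hln
  rw [hsub]
  unfold vcEntropy
  rw [← hS]
  ring
end

section
/- The empirical Rademacher complexity can be written in terms of effective information as 𝓡(F,D) = 1 − 2·Σ_ε ε·2^{−ei(𝐑_{F,D},ε)}, the sum running over all ε in the image of the min-risk 𝐑_{F,D}. -/
open Classical Finset

/-- The elements of `Y = {-1,+1}` viewed as real numbers: `true ↦ +1`, `false ↦ -1`. -/
noncomputable def val (b : Bool) : ℝ := if b then 1 else -1

/-- Empirical Rademacher complexity of `F` on `D`. -/
noncomputable def rademacher {X : Type*} [Fintype X] {l : ℕ}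
    (F : Finset (X → Bool)) (hF : F.Nonempty) (D : Fin l → X) : ℝ :=
  (1 / (Fintype.card (X → Bool)) : ℝ) * ∑ σ : X → Bool,
    F.sup' hF (fun f => (1 / l : ℝ) * ∑ i, val (σ (D i)) * val (f (D i)))

/-- The empirical Rademacher complexity in terms of effective information:
`𝓡(F,D) = 1 - 2 Σ_ε ε · 2^{-ei(𝐑_{F,D},ε)}`, summing over the image of the
min-risk. -/
theorem rademacher_eq_one_sub_two_sum_ei
    {X : Type*} [Fintype X] [Nonempty X] {l : ℕ} (hl : 1 ≤ l)
    (F : Finset (X → Bool)) (hF : F.Nonempty) (D : Fin l → X) :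
    rademacher F hF D
      = 1 - 2 * ∑ ε ∈ Finset.univ.image (minRisk F hF D),
          ε * (2 : ℝ) ^ (-(ei (minRisk F hF D) ε)) := by
  classical
  set m := minRisk F hF D with hm
  have hlR : (l : ℝ) ≠ 0 := Nat.cast_ne_zero.mpr (by omega)
  have hN0 : (0 : ℝ) < (Fintype.card (X → Bool) : ℝ) := by
    exact_mod_cast Fintype.card_pos
  -- Step 1: the sup' of correlations equals 1 - 2 * minRisk
  have key : ∀ σ : X → Bool,
      F.sup' hF (fun f => (1 / l : ℝ) * ∑ i, val (σ (D i)) * val (f (D i)))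
        = 1 - 2 * m σ := by
    intro σ
    have h1 : ∀ f : X → Bool,
        (1 / l : ℝ) * ∑ i, val (σ (D i)) * val (f (D i))
          = 1 - 2 * empRisk f D (fun i => σ (D i)) := by
      intro f
      have hterm : ∀ i : Fin l, val (σ (D i)) * val (f (D i))
          = 1 - 2 * (if f (D i) ≠ σ (D i) then (1 : ℝ) else 0) := by
        intro i; cases σ (D i) <;> cases f (D i) <;> simp [_root_.val] <;> norm_num
      have hsum : ∑ i : Fin l, val (σ (D i)) * val (f (D i))
          = (l : ℝ) - 2 * ∑ i : Fin l,
              (if f (D i) ≠ σ (D i) then (1 : ℝ) else 0) := by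
        rw [Finset.sum_congr rfl fun i _ => hterm i, Finset.sum_sub_distrib,
          Finset.sum_const, Finset.card_univ, Fintype.card_fin,
          ← Finset.mul_sum]
        simp
      rw [hsum, empRisk]
      field_simp
    rw [hm, minRisk]
    obtain ⟨f0, hf0, heq⟩ :=
      Finset.exists_mem_eq_inf' hF (fun f => empRisk f D (fun i => σ (D i)))
    apply le_antisymm
    · apply Finset.sup'_le
      intro f hf
      rw [h1 f]
      have := Finset.inf'_le (fun f => empRisk f D (fun i => σ (D i))) hf
      linarith
    · rw [heq, ← h1 f0]
      exact Finset.le_sup'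
        (fun g : X → Bool => (1 / l : ℝ) * ∑ i, _root_.val (σ (D i)) * _root_.val (g (D i))) hf0
  -- Step 2: 2^{-ei} is the fraction of the fiber
  have hpow : ∀ ε ∈ Finset.univ.image m, (2 : ℝ) ^ (-(ei m ε))
      = ((Finset.univ.filter (fun σ => m σ = ε)).card : ℝ)
          / (Fintype.card (X → Bool) : ℝ) := by
    intro ε hε
    obtain ⟨σ0, _, hσ0⟩ := Finset.mem_image.mp hε
    have hc : (0 : ℝ) < ((Finset.univ.filter (fun σ => m σ = ε)).card : ℝ) := by
      have hmem : σ0 ∈ Finset.univ.filter (fun σ => m σ = ε) := by simp [hσ0]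
      exact_mod_cast Finset.card_pos.mpr ⟨σ0, hmem⟩
    rw [ei, neg_sub, ← Real.logb_div (ne_of_gt hc) (ne_of_gt hN0)]
    exact Real.rpow_logb (by norm_num) (by norm_num) (by positivity)
  -- Step 3: group the sum over σ by the value of m
  have hS : ∑ σ : X → Bool, m σ
      = ∑ ε ∈ Finset.univ.image m,
          ((Finset.univ.filter fun σ => m σ = ε).card : ℝ) * ε := by
    rw [← Finset.sum_fiberwise_of_maps_to
      (fun σ _ => Finset.mem_image_of_mem m (Finset.mem_univ σ)) m]
    refine Finset.sum_congr rfl fun ε hε => ?_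
    calc ∑ σ ∈ Finset.univ.filter (fun σ => m σ = ε), m σ
        = ∑ σ ∈ Finset.univ.filter (fun σ => m σ = ε), ε :=
          Finset.sum_congr rfl fun σ hσ => (Finset.mem_filter.mp hσ).2
      _ = _ := by rw [Finset.sum_const, nsmul_eq_mul]
  -- Step 4: put it all together
  have hB : ∑ ε ∈ Finset.univ.image m, ε * (2 : ℝ) ^ (-(ei m ε))
      = (∑ σ : X → Bool, m σ) / (Fintype.card (X → Bool) : ℝ) := by
    rw [hS, Finset.sum_div]
    exact Finset.sum_congr rfl fun ε hε => by rw [hpow ε hε]; ring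
  calc rademacher F hF D
      = (1 / (Fintype.card (X → Bool)) : ℝ) * ∑ σ : X → Bool, (1 - 2 * m σ) := by
        rw [rademacher]
        congr 1
        exact Finset.sum_congr rfl fun σ _ => key σ
    _ = 1 - 2 * ((∑ σ : X → Bool, m σ) / (Fintype.card (X → Bool) : ℝ)) := by
        rw [Finset.sum_sub_distrib, Finset.sum_const, Finset.card_univ,
          ← Finset.mul_sum]
        field_simp
        rw [nsmul_eq_mul, mul_one]
    _ = _ := by rw [← hB]
end

section
/- With probability at least 1 − δ over the i.i.d. draw of the sample D = (x_1,…,x_l) from P, every f ∈ F satisfies R(f) ≤ R(f,D,L) + [1 − 2·Σ_ε ε·2^{−ei(𝐑_{F,D},ε)}] + c₃·√((1 − log₂ δ)/l), where L = (σ*(x_1),…,σ*(x_l)), the sum runs over all ε in the image of the min-risk 𝐑_{F,D}, and c₃ = √(2/log₂ e) = √(2·ln 2). -/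
open Classical Finset

/-- True risk of `f` as an approximation of the supervisor `σs`, with respect
to distribution `p` on `X`. -/
noncomputable def risk {X : Type*} [Fintype X] (p : X → ℝ) (σs f : X → Bool) : ℝ :=
  ∑ x, (if f x ≠ σs x then (1 : ℝ) else 0) * p x

noncomputable def sgn (b : Bool) : ℝ := if b then -1 else 1

lemma sgn_abs (b : Bool) : |sgn b| ≤ 1 := by cases b <;> simp [sgn]

lemma sgn_mul_self (b : Bool) : sgn b * sgn b = 1 := by cases b <;> norm_num [sgn]

lemma sgn_not (b : Bool) : sgn (!b) = - sgn b := by cases b <;> simp [sgn]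

lemma sgn_eq' (a b : Bool) : sgn a * sgn b = 1 - 2 * (if b ≠ a then (1:ℝ) else 0) := by
  cases a <;> cases b <;> norm_num [sgn]

lemma sgn_abs_eq (b : Bool) : |sgn b| = 1 := by cases b <;> simp [sgn]

section SupHelpers
variable {ι : Type*} {F : Finset ι} (hF : F.Nonempty)

lemma sup'_add_le (u v : ι → ℝ) :
    F.sup' hF (fun f => u f + v f) ≤ F.sup' hF u + F.sup' hF v := by
  apply Finset.sup'_le
  intro f hf
  exact add_le_add (Finset.le_sup' u hf) (Finset.le_sup' v hf)

lemma sup'_const_add (a : ℝ) (u : ι → ℝ) :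
    F.sup' hF (fun f => a + u f) = a + F.sup' hF u := by
  apply le_antisymm
  · apply Finset.sup'_le; intro f hf
    exact add_le_add_right (Finset.le_sup' u hf) a
  · obtain ⟨f, hf, hfe⟩ := Finset.exists_mem_eq_sup' hF u
    rw [hfe]
    exact Finset.le_sup' (fun f => a + u f) hf

lemma sup'_const_mul (a : ℝ) (ha : 0 ≤ a) (u : ι → ℝ) :
    F.sup' hF (fun f => a * u f) = a * F.sup' hF u := by
  apply le_antisymm
  · apply Finset.sup'_le; intro f hf
    exact mul_le_mul_of_nonneg_left (Finset.le_sup' u hf) ha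
  · obtain ⟨f, hf, hfe⟩ := Finset.exists_mem_eq_sup' hF u
    rw [hfe]
    exact Finset.le_sup' (fun f => a * u f) hf

lemma sup'_sub_le (u v : ι → ℝ) :
    F.sup' hF u - F.sup' hF v ≤ F.sup' hF (fun f => u f - v f) := by
  rw [sub_le_iff_le_add]
  apply Finset.sup'_le
  intro f hf
  calc u f = (u f - v f) + v f := by ring
  _ ≤ _ := add_le_add (Finset.le_sup' (fun f => u f - v f) hf) (Finset.le_sup' v hf)

/-- min-risk vs max-correlation. -/
lemma inf'_affine (u : ι → ℝ) :
    F.inf' hF (fun f => (1 - u f) / 2) = (1 - F.sup' hF u) / 2 := by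
  apply le_antisymm
  · obtain ⟨f, hf, hfe⟩ := Finset.exists_mem_eq_sup' hF u
    rw [hfe]
    exact Finset.inf'_le (fun f => (1 - u f)/2) hf
  · apply Finset.le_inf'
    intro f hf
    have := Finset.le_sup' u hf
    linarith

/-- weighted average of sup' dominates sup' of weighted averages. -/
lemma sup'_sum_le {ω : Type*} (s : Finset ω) (w : ω → ℝ) (hw : ∀ x ∈ s, 0 ≤ w x)
    (g : ω → ι → ℝ) :
    F.sup' hF (fun f => ∑ x ∈ s, w x * g x f) ≤ ∑ x ∈ s, w x * F.sup' hF (g x) := by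
  apply Finset.sup'_le
  intro f hf
  apply Finset.sum_le_sum
  intro x hx
  exact mul_le_mul_of_nonneg_left (Finset.le_sup' (g x) hf) (hw x hx)

/-- Core pairing/comparison lemma. -/
lemma sup'_pair_compare (A u v : ι → ℝ) (K : ℝ)
    (h : ∀ f ∈ F, ∀ g ∈ F, u f - u g ≤ max (v f - v g) (v g - v f) + K) :
    F.sup' hF (fun f => A f + u f) + F.sup' hF (fun f => A f - u f)
      ≤ F.sup' hF (fun f => A f + v f) + F.sup' hF (fun f => A f - v f) + K := by
  obtain ⟨f₁, hf₁, e₁⟩ := Finset.exists_mem_eq_sup' hF (fun f => A f + u f)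
  obtain ⟨f₂, hf₂, e₂⟩ := Finset.exists_mem_eq_sup' hF (fun f => A f - u f)
  rw [e₁, e₂]
  have hb := h f₁ hf₁ f₂ hf₂
  rcases le_total (v f₁ - v f₂) (v f₂ - v f₁) with hc | hc
  · have h1 : A f₂ + v f₂ ≤ F.sup' hF (fun f => A f + v f) :=
      Finset.le_sup' (fun f => A f + v f) hf₂
    have h2 : A f₁ - v f₁ ≤ F.sup' hF (fun f => A f - v f) :=
      Finset.le_sup' (fun f => A f - v f) hf₁
    rw [max_eq_right hc] at hb
    linarith
  · have h1 : A f₁ + v f₁ ≤ F.sup' hF (fun f => A f + v f) :=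
      Finset.le_sup' (fun f => A f + v f) hf₁
    have h2 : A f₂ - v f₂ ≤ F.sup' hF (fun f => A f - v f) :=
      Finset.le_sup' (fun f => A f - v f) hf₂
    rw [max_eq_left hc] at hb
    linarith

end SupHelpers

lemma sum_flip {α : Type*} [Fintype α] (e : α → α) (he : Function.Involutive e)
    (g : α → ℝ) : ∑ a : α, g (e a) = ∑ a : α, g a :=
  Fintype.sum_equiv he.toPerm (fun a => g (e a)) g (fun _ => rfl)

/-- Hoeffding's lemma for a finite probability vector. -/
lemma hoeffding_lemma {X : Type*} [Fintype X] [Nonempty X]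
    (w : X → ℝ) (hw : ∀ x, 0 ≤ w x) (hw1 : ∑ x, w x = 1)
    (v : X → ℝ) (hv0 : ∑ x, w x * v x = 0)
    (R : ℝ) (hR : ∀ x y, v x - v y ≤ R) (t : ℝ) (ht : 0 ≤ t) :
    ∑ x, w x * Real.exp (t * v x) ≤ Real.exp (t ^ 2 * R ^ 2 / 8) := by
  -- midpoint
  have hne : (Finset.univ : Finset X).Nonempty := univ_nonempty
  set M : ℝ := univ.sup' hne v with hM
  set N : ℝ := univ.inf' hne v with hN
  obtain ⟨xM, _, hxM⟩ := Finset.exists_mem_eq_sup' hne v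
  obtain ⟨xN, _, hxN⟩ := Finset.exists_mem_eq_inf' hne v
  have hMN : M - N ≤ R := by rw [hM, hN, hxM, hxN]; exact hR xM xN
  have hR0 : 0 ≤ R := le_trans (by simp) (hR (Classical.arbitrary X) (Classical.arbitrary X))
  set m : ℝ := (M + N) / 2 with hm
  have hvm : ∀ x, (v x - m) ^ 2 ≤ R ^ 2 / 4 := by
    intro x
    have h1 : v x ≤ M := Finset.le_sup' v (mem_univ x)
    have h2 : N ≤ v x := Finset.inf'_le v (mem_univ x)
    have : (v x - m) ^ 2 ≤ (R / 2) ^ 2 := by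
      apply sq_le_sq'
      · rw [hm]; nlinarith
      · rw [hm]; nlinarith
    nlinarith
  -- the three sums
  set g : ℝ → ℝ := fun s => ∑ x, w x * Real.exp (s * v x) with hg
  set g1 : ℝ → ℝ := fun s => ∑ x, w x * (v x * Real.exp (s * v x)) with hg1
  set g2 : ℝ → ℝ := fun s => ∑ x, w x * (v x ^ 2 * Real.exp (s * v x)) with hg2
  have hgpos : ∀ s, 0 < g s := by
    intro s
    obtain ⟨x0, hx0⟩ : ∃ x, 0 < w x := by
      by_contra h
      push_neg at h
      have : ∀ x, w x = 0 := fun x => le_antisymm (h x) (hw x)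
      simp [this] at hw1
    have hterm : ∀ x ∈ (univ : Finset X), 0 ≤ w x * Real.exp (s * v x) :=
      fun x _ => mul_nonneg (hw x) (Real.exp_pos _).le
    have := Finset.single_le_sum hterm (mem_univ x0)
    have hp : 0 < w x0 * Real.exp (s * v x0) := mul_pos hx0 (Real.exp_pos _)
    rw [hg]; exact lt_of_lt_of_le hp this
  have hdg : ∀ s, HasDerivAt g (g1 s) s := by
    intro s
    apply HasDerivAt.fun_sum
    intro x _
    have h1 : HasDerivAt (fun u : ℝ => u * v x) (v x) s := by
      simpa using (hasDerivAt_id s).mul_const (v x)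
    have h2 : HasDerivAt (fun u : ℝ => Real.exp (u * v x)) (Real.exp (s * v x) * v x) s :=
      h1.exp
    have := h2.const_mul (w x)
    exact this.congr_deriv (by ring)
  have hdg1 : ∀ s, HasDerivAt g1 (g2 s) s := by
    intro s
    apply HasDerivAt.fun_sum
    intro x _
    have h1 : HasDerivAt (fun u : ℝ => u * v x) (v x) s := by
      simpa using (hasDerivAt_id s).mul_const (v x)
    have h2 : HasDerivAt (fun u : ℝ => Real.exp (u * v x)) (Real.exp (s * v x) * v x) s :=
      h1.exp
    have := (h2.const_mul (v x)).const_mul (w x)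
    exact this.congr_deriv (by ring)
  -- variance bound
  have hkey : ∀ s, g2 s * g s - g1 s ^ 2 ≤ R ^ 2 / 4 * g s ^ 2 := by
    intro s
    set S : ℝ := ∑ x, w x * ((v x - m) ^ 2 * Real.exp (s * v x)) with hS
    have hSe : S = g2 s - 2 * m * g1 s + m ^ 2 * g s := by
      rw [hS, hg2, hg1, hg]
      rw [Finset.mul_sum, Finset.mul_sum, ← Finset.sum_sub_distrib, ← Finset.sum_add_distrib]
      apply Finset.sum_congr rfl
      intro x _
      ring
    have hid : g2 s * g s - g1 s ^ 2 = S * g s - (g1 s - m * g s) ^ 2 := by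
      rw [hSe]; ring
    have hSle : S ≤ R ^ 2 / 4 * g s := by
      rw [hS, hg, Finset.mul_sum]
      apply Finset.sum_le_sum
      intro x _
      have he := (Real.exp_pos (s * v x)).le
      nlinarith [mul_nonneg (mul_nonneg (hw x) he) (sub_nonneg.mpr (hvm x))]
    have hsq : 0 ≤ (g1 s - m * g s) ^ 2 := sq_nonneg _
    have hgp := (hgpos s).le
    nlinarith [hgpos s]
  -- h and h'
  set h' : ℝ → ℝ := fun s => s * R ^ 2 / 4 - g1 s / g s with hh'
  set h : ℝ → ℝ := fun s => s ^ 2 * R ^ 2 / 8 - Real.log (g s) with hh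
  have hdh : ∀ s, HasDerivAt h (h' s) s := by
    intro s
    have hlog : HasDerivAt (fun u => Real.log (g u)) (g1 s / g s) s :=
      (hdg s).log (hgpos s).ne'
    have hpoly : HasDerivAt (fun u : ℝ => u ^ 2 * R ^ 2 / 8) (s * R ^ 2 / 4) s := by
      have := ((hasDerivAt_pow 2 s).mul_const (R ^ 2)).div_const 8
      exact this.congr_deriv (by norm_num; ring)
    exact hpoly.sub hlog
  have hdh' : ∀ s, HasDerivAt h' (R ^ 2 / 4 - (g2 s * g s - g1 s * g1 s) / g s ^ 2) s := by
    intro s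
    have hdiv : HasDerivAt (fun u => g1 u / g u)
        ((g2 s * g s - g1 s * g1 s) / g s ^ 2) s :=
      (hdg1 s).div (hdg s) (hgpos s).ne'
    have hpoly : HasDerivAt (fun u : ℝ => u * R ^ 2 / 4) (R ^ 2 / 4) s := by
      have := ((hasDerivAt_id s).mul_const (R ^ 2)).div_const 4
      exact this.congr_deriv (by ring)
    exact hpoly.sub hdiv
  have hh'mono : Monotone h' := by
    apply monotone_of_deriv_nonneg
    · exact fun s => (hdh' s).differentiableAt
    · intro s
      rw [(hdh' s).deriv]
      have := hkey s
      have hg2 : (0:ℝ) < g s ^ 2 := pow_pos (hgpos s) 2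
      rw [sub_nonneg, div_le_iff₀ hg2]
      nlinarith
  have hg0 : g 0 = 1 := by rw [hg]; simp [hw1]
  have hg10 : g1 0 = 0 := by
    rw [hg1]
    simpa using hv0
  have hh'0 : h' 0 = 0 := by
    have : h' 0 = 0 * R ^ 2 / 4 - g1 0 / g 0 := rfl
    rw [this, hg0, hg10]; simp
  have hh'nonneg : ∀ s, 0 ≤ s → 0 ≤ h' s := by
    intro s hs
    rw [← hh'0]
    exact hh'mono hs
  have hhmono : MonotoneOn h (Set.Ici 0) := by
    apply monotoneOn_of_deriv_nonneg (convex_Ici 0)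
    · exact (Continuous.continuousOn (by
        have : ∀ s, DifferentiableAt ℝ h s := fun s => (hdh s).differentiableAt
        exact Differentiable.continuous this))
    · intro s _
      exact ((hdh s).differentiableAt).differentiableWithinAt
    · intro s hs
      rw [interior_Ici] at hs
      rw [(hdh s).deriv]
      exact hh'nonneg s (le_of_lt hs)
  have hh0 : h 0 = 0 := by
    have : h 0 = 0 ^ 2 * R ^ 2 / 8 - Real.log (g 0) := rfl
    rw [this, hg0]; simp
  have hht : 0 ≤ h t := by
    rw [← hh0]
    exact hhmono (by simp) (by simpa using ht) ht
  have hhte : h t = t ^ 2 * R ^ 2 / 8 - Real.log (g t) := rfl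
  rw [hhte] at hht
  have hlog : Real.log (g t) ≤ t ^ 2 * R ^ 2 / 8 := by linarith
  calc g t = Real.exp (Real.log (g t)) := (Real.exp_log (hgpos t)).symm
  _ ≤ _ := Real.exp_le_exp.mpr hlog

section Measure
variable {X : Type*} [Fintype X] [Nonempty X]

lemma W_nonneg (p : X → ℝ) (hp : ∀ x, 0 ≤ p x) {l : ℕ} (D : Fin l → X) :
    0 ≤ ∏ i, p (D i) := Finset.prod_nonneg fun i _ => hp (D i)

lemma sum_W (p : X → ℝ) (hp1 : ∑ x, p x = 1) (l : ℕ) :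
    ∑ D : Fin l → X, ∏ i, p (D i) = 1 := by
  have hps := Finset.prod_univ_sum (fun _ : Fin l => (univ : Finset X)) (fun _ x => p x)
  rw [Fintype.piFinset_univ] at hps
  rw [← hps]
  simp [hp1]

lemma marginal (p : X → ℝ) (hp1 : ∑ x, p x = 1) {l : ℕ} (i : Fin l) (v : X → ℝ) :
    ∑ D : Fin l → X, (∏ j, p (D j)) * v (D i) = ∑ x, p x * v x := by
  classical
  set gg : Fin l → X → ℝ := fun j x => if j = i then p x * v x else p x with hgg
  have hterm : ∀ D : Fin l → X, (∏ j, p (D j)) * v (D i) = ∏ j, gg j (D j) := by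
    intro D
    rw [← Finset.mul_prod_erase univ (fun j => gg j (D j)) (mem_univ i),
        ← Finset.mul_prod_erase univ (fun j => p (D j)) (mem_univ i)]
    have h1 : gg i (D i) = p (D i) * v (D i) := by simp [hgg]
    have h2 : ∏ j ∈ univ.erase i, gg j (D j) = ∏ j ∈ univ.erase i, p (D j) := by
      apply Finset.prod_congr rfl
      intro j hj
      simp [hgg, (Finset.mem_erase.mp hj).1]
    rw [h1, h2]; ring
  rw [Finset.sum_congr rfl fun D _ => hterm D]
  have hps := Finset.prod_univ_sum (fun _ : Fin l => (univ : Finset X)) gg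
  rw [Fintype.piFinset_univ] at hps
  rw [← hps]
  have hfac : ∀ j : Fin l, (∑ x, gg j x) = if j = i then (∑ x, p x * v x) else 1 := by
    intro j
    by_cases hji : j = i <;> simp [hgg, hji, hp1]
  rw [Finset.prod_congr rfl fun j _ => hfac j]
  simp

lemma mgf_bound (p : X → ℝ) (hp : ∀ x, 0 ≤ p x) (hp1 : ∑ x, p x = 1) :
    ∀ {l : ℕ} (ψ : (Fin l → X) → ℝ) (c t : ℝ), 0 ≤ t →
    (∀ (j : Fin l) (D : Fin l → X) (x y : X),
        ψ (Function.update D j x) - ψ (Function.update D j y) ≤ c) →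
    ∑ D : Fin l → X, (∏ i, p (D i)) *
        Real.exp (t * (ψ D - ∑ D' : Fin l → X, (∏ i, p (D' i)) * ψ D'))
      ≤ Real.exp (l * (t ^ 2 * c ^ 2 / 8)) := by
  intro l
  induction l with
  | zero =>
    intro ψ c t ht hbd
    haveI : Unique (Fin 0 → X) := ⟨⟨fun i => i.elim0⟩, fun f => funext fun i => i.elim0⟩
    rw [Fintype.sum_unique, Fintype.sum_unique]
    simp
  | succ l IH =>
    intro ψ c t ht hbd
    set w' : (Fin l → X) → ℝ := fun T => ∏ i, p (T i) with hw'
    set A : (Fin l → X) → ℝ := fun T => ∑ x, p x * ψ (Fin.cons x T : Fin (l+1) → X) with hA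
    have hw'0 : ∀ T, 0 ≤ w' T := fun T => W_nonneg p hp T
    -- reindexing
    have hreindex : ∀ f : (Fin (l+1) → X) → ℝ,
        ∑ D : Fin (l+1) → X, f D = ∑ x : X, ∑ T : Fin l → X, f (Fin.cons x T) := by
      intro f
      calc ∑ D : Fin (l+1) → X, f D
          = ∑ q : X × (Fin l → X), f (Fin.cons q.1 q.2) :=
            (Fintype.sum_equiv (Fin.consEquiv (fun _ => X))
              (fun q => f (Fin.cons q.1 q.2)) f
              (fun q => by obtain ⟨x, T⟩ := q; rfl)).symm
        _ = ∑ x : X, ∑ T : Fin l → X, f (Fin.cons x T) := Fintype.sum_prod_type _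
    have hwcons : ∀ (x : X) (T : Fin l → X),
        (∏ i, p ((Fin.cons x T : Fin (l+1) → X) i)) = p x * w' T := by
      intro x T
      rw [Fin.prod_univ_succ]
      simp [hw']
    -- expectation identity
    have hEeq : (∑ D : Fin (l+1) → X, (∏ i, p (D i)) * ψ D)
        = ∑ T : Fin l → X, w' T * A T := by
      rw [hreindex]
      rw [Finset.sum_comm]
      apply Finset.sum_congr rfl
      intro T _
      rw [hA, Finset.mul_sum]
      apply Finset.sum_congr rfl
      intro x _
      rw [hwcons]; ring
    set μ : ℝ := ∑ T : Fin l → X, w' T * A T with hμ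
    -- A has bounded differences
    have hbdA : ∀ (j : Fin l) (T : Fin l → X) (x y : X),
        A (Function.update T j x) - A (Function.update T j y) ≤ c := by
      intro j T x y
      rw [hA]
      rw [← Finset.sum_sub_distrib]
      calc ∑ z : X, (p z * ψ (Fin.cons z (Function.update T j x) : Fin (l+1) → X)
              - p z * ψ (Fin.cons z (Function.update T j y) : Fin (l+1) → X))
          ≤ ∑ z : X, p z * c := by
            apply Finset.sum_le_sum
            intro z _
            rw [← mul_sub]
            apply mul_le_mul_of_nonneg_left _ (hp z)
            rw [Fin.cons_update, Fin.cons_update]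
            exact hbd j.succ (Fin.cons z T) x y
        _ = c := by rw [← Finset.sum_mul, hp1, one_mul]
    -- inner Hoeffding
    have hinner : ∀ T : Fin l → X,
        ∑ x : X, p x * Real.exp (t * (ψ (Fin.cons x T : Fin (l+1) → X) - A T))
          ≤ Real.exp (t ^ 2 * c ^ 2 / 8) := by
      intro T
      have hrange : ∀ x y : X,
          (ψ (Fin.cons x T : Fin (l+1) → X) - A T) - (ψ (Fin.cons y T : Fin (l+1) → X) - A T) ≤ c := by
        intro x y
        have h0 := hbd 0 (Fin.cons y T) x y
        rw [Fin.update_cons_zero, Fin.update_cons_zero] at h0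
        linarith
      have hmean : ∑ x : X, p x * (ψ (Fin.cons x T : Fin (l+1) → X) - A T) = 0 := by
        rw [hA]
        rw [Finset.sum_congr rfl (fun x _ => mul_sub (p x) _ _),
            Finset.sum_sub_distrib, ← Finset.sum_mul, hp1]
        ring
      exact hoeffding_lemma p hp hp1 (fun x => ψ (Fin.cons x T : Fin (l+1) → X) - A T) hmean c
        hrange t ht
    -- assemble
    rw [hreindex, hEeq, Finset.sum_comm]
    have hstep : ∀ T : Fin l → X,
        (∑ x : X, (∏ i, p ((Fin.cons x T : Fin (l+1) → X) i)) * Real.exp (t * (ψ (Fin.cons x T : Fin (l+1) → X) - μ)))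
          ≤ w' T * Real.exp (t * (A T - μ)) * Real.exp (t ^ 2 * c ^ 2 / 8) := by
      intro T
      have : ∀ x : X, (∏ i, p ((Fin.cons x T : Fin (l+1) → X) i)) * Real.exp (t * (ψ (Fin.cons x T : Fin (l+1) → X) - μ))
          = w' T * Real.exp (t * (A T - μ)) * (p x * Real.exp (t * (ψ (Fin.cons x T : Fin (l+1) → X) - A T))) := by
        intro x
        rw [hwcons, show t * (ψ (Fin.cons x T : Fin (l+1) → X) - μ)
              = t * (A T - μ) + t * (ψ (Fin.cons x T : Fin (l+1) → X) - A T) by ring, Real.exp_add]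
        ring
      rw [Finset.sum_congr rfl fun x _ => this x, ← Finset.mul_sum]
      apply mul_le_mul_of_nonneg_left (hinner T)
      exact mul_nonneg (hw'0 T) (Real.exp_pos _).le
    calc ∑ T : Fin l → X, ∑ x : X,
            (∏ i, p ((Fin.cons x T : Fin (l+1) → X) i)) * Real.exp (t * (ψ (Fin.cons x T : Fin (l+1) → X) - μ))
        ≤ ∑ T : Fin l → X, w' T * Real.exp (t * (A T - μ)) * Real.exp (t ^ 2 * c ^ 2 / 8) :=
          Finset.sum_le_sum fun T _ => hstep T
      _ = (∑ T : Fin l → X, w' T * Real.exp (t * (A T - μ))) * Real.exp (t ^ 2 * c ^ 2 / 8) := by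
          rw [Finset.sum_mul]
      _ ≤ Real.exp (l * (t ^ 2 * c ^ 2 / 8)) * Real.exp (t ^ 2 * c ^ 2 / 8) := by
          apply mul_le_mul_of_nonneg_right _ (Real.exp_pos _).le
          exact IH A c t ht hbdA
      _ = Real.exp ((l + 1 : ℕ) * (t ^ 2 * c ^ 2 / 8)) := by
          rw [← Real.exp_add]
          congr 1
          push_cast
          ring

lemma mcdiarmid_tail (p : X → ℝ) (hp : ∀ x, 0 ≤ p x) (hp1 : ∑ x, p x = 1)
    {l : ℕ} (hl : 1 ≤ l) (ψ : (Fin l → X) → ℝ)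
    (hbd : ∀ (j : Fin l) (D : Fin l → X) (x y : X),
        ψ (Function.update D j x) - ψ (Function.update D j y) ≤ 2 / l)
    (hE : ∑ D : Fin l → X, (∏ i, p (D i)) * ψ D ≤ 0)
    (s : ℝ) (hs : 0 < s) :
    ∑ D : Fin l → X, (∏ i, p (D i)) * (if s ≤ ψ D then (1:ℝ) else 0)
      ≤ Real.exp (-(s ^ 2 * l) / 2) := by
  have hl0 : (0:ℝ) < l := by exact_mod_cast hl
  set μ : ℝ := ∑ D : Fin l → X, (∏ i, p (D i)) * ψ D with hμ
  set t : ℝ := s * l with htdef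
  have ht : 0 ≤ t := le_of_lt (mul_pos hs hl0)
  have hmgf := mgf_bound p hp hp1 ψ (2 / l) t ht hbd
  have hterm : ∀ D : Fin l → X,
      (∏ i, p (D i)) * (if s ≤ ψ D then (1:ℝ) else 0)
        ≤ (∏ i, p (D i)) * (Real.exp (-(t * s)) * Real.exp (t * (ψ D - μ))) := by
    intro D
    apply mul_le_mul_of_nonneg_left _ (W_nonneg p hp D)
    by_cases hD : s ≤ ψ D
    · rw [if_pos hD, ← Real.exp_add]
      apply Real.one_le_exp
      nlinarith [mul_nonneg ht (show (0:ℝ) ≤ ψ D - μ - s by linarith)]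
    · rw [if_neg hD]
      positivity
  calc ∑ D : Fin l → X, (∏ i, p (D i)) * (if s ≤ ψ D then (1:ℝ) else 0)
      ≤ ∑ D : Fin l → X, (∏ i, p (D i)) *
          (Real.exp (-(t * s)) * Real.exp (t * (ψ D - μ))) :=
        Finset.sum_le_sum fun D _ => hterm D
    _ = Real.exp (-(t * s)) *
          ∑ D : Fin l → X, (∏ i, p (D i)) * Real.exp (t * (ψ D - μ)) := by
        rw [Finset.mul_sum]
        apply Finset.sum_congr rfl
        intro D _
        ring
    _ ≤ Real.exp (-(t * s)) * Real.exp (l * (t ^ 2 * (2 / l) ^ 2 / 8)) :=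
        mul_le_mul_of_nonneg_left hmgf (Real.exp_pos _).le
    _ = Real.exp (-(s ^ 2 * l) / 2) := by
        rw [← Real.exp_add]
        congr 1
        rw [htdef]
        field_simp
        ring
end Measure

section Defs
variable {X : Type*} [Fintype X] [Nonempty X]

/-- correlation of `f` with labels `σ` on data `D`. -/
noncomputable def corr {l : ℕ} (D : Fin l → X) (σ f : X → Bool) : ℝ :=
  (1 / l : ℝ) * ∑ i, sgn (σ (D i)) * sgn (f (D i))

noncomputable def Gfun {l : ℕ} (F : Finset (X → Bool)) (hF : F.Nonempty)
    (D : Fin l → X) : ℝ :=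
  (Fintype.card (X → Bool) : ℝ)⁻¹ * ∑ σ : X → Bool, F.sup' hF (fun f => corr D σ f)

variable {l : ℕ} (F : Finset (X → Bool)) (hF : F.Nonempty)

lemma corr_eq (hl : 1 ≤ l) (D : Fin l → X) (σ f : X → Bool) :
    corr D σ f = 1 - 2 * empRisk f D (fun i => σ (D i)) := by
  have hl0 : (l : ℝ) ≠ 0 := by positivity
  unfold corr empRisk
  rw [Finset.sum_congr rfl (fun i _ => sgn_eq' (σ (D i)) (f (D i)))]
  rw [Finset.sum_sub_distrib, Finset.sum_const, ← Finset.mul_sum]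
  simp only [card_univ, Fintype.card_fin, nsmul_eq_mul, mul_one]
  field_simp

lemma minRisk_corr (hl : 1 ≤ l) (D : Fin l → X) (σ : X → Bool) :
    minRisk F hF D σ = (1 - F.sup' hF (fun f => corr D σ f)) / 2 := by
  unfold minRisk
  rw [← inf'_affine hF (fun f => corr D σ f)]
  apply Finset.inf'_congr hF rfl
  intro f _
  rw [corr_eq hl D σ f]
  ring

lemma bracket_eq_G (hl : 1 ≤ l) (D : Fin l → X) :
    (1 - 2 * ∑ ε ∈ Finset.univ.image (minRisk F hF D),
        ε * (2 : ℝ) ^ (-(ei (minRisk F hF D) ε))) = Gfun F hF D := by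
  have hNpos : 0 < (Fintype.card (X → Bool) : ℝ) := by
    exact_mod_cast Fintype.card_pos
  have hpow : ∀ ε ∈ Finset.univ.image (minRisk F hF D),
      (2 : ℝ) ^ (-(ei (minRisk F hF D) ε))
        = ((Finset.univ.filter (fun σ => minRisk F hF D σ = ε)).card : ℝ)
            / (Fintype.card (X → Bool) : ℝ) := by
    intro ε hε
    obtain ⟨σ0, _, hσ0⟩ := Finset.mem_image.mp hε
    have hfpos : 0 < ((Finset.univ.filter (fun σ => minRisk F hF D σ = ε)).card : ℝ) := by
      have : σ0 ∈ Finset.univ.filter (fun σ => minRisk F hF D σ = ε) :=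
        Finset.mem_filter.mpr ⟨mem_univ _, hσ0⟩
      exact_mod_cast Finset.card_pos.mpr ⟨σ0, this⟩
    unfold ei
    rw [neg_sub, Real.rpow_sub (by norm_num : (0:ℝ) < 2),
        Real.rpow_logb (by norm_num) (by norm_num) hfpos,
        Real.rpow_logb (by norm_num) (by norm_num) hNpos]
  have hpow' : ∀ ε ∈ Finset.univ.image (minRisk F hF D),
      ε * (2 : ℝ) ^ (-(ei (minRisk F hF D) ε))
        = ε * (((Finset.univ.filter (fun σ => minRisk F hF D σ = ε)).card : ℝ)
            / (Fintype.card (X → Bool) : ℝ)) := fun ε hε => by rw [hpow ε hε]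
  rw [Finset.sum_congr rfl hpow']
  have hcomp := Finset.sum_comp (fun x : ℝ => x) (minRisk F hF D) (s := Finset.univ)
  have hsum : ∑ ε ∈ Finset.univ.image (minRisk F hF D),
      ε * (((Finset.univ.filter (fun σ => minRisk F hF D σ = ε)).card : ℝ)
        / (Fintype.card (X → Bool) : ℝ))
      = (∑ σ : X → Bool, minRisk F hF D σ) / (Fintype.card (X → Bool) : ℝ) := by
    rw [hcomp, Finset.sum_div]
    apply Finset.sum_congr rfl
    intro ε _
    rw [nsmul_eq_mul]
    ring
  rw [hsum]
  unfold Gfun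
  have hG2 : ∑ σ : X → Bool, F.sup' hF (fun f => corr D σ f)
      = ∑ σ : X → Bool, (1 - 2 * minRisk F hF D σ) := by
    apply Finset.sum_congr rfl
    intro σ _
    rw [minRisk_corr F hF hl D σ]
    ring
  rw [hG2, Finset.sum_sub_distrib, Finset.sum_const, ← Finset.mul_sum]
  simp only [card_univ, nsmul_eq_mul, mul_one]
  field_simp

end Defs

section HG
variable {X : Type*} [Fintype X] [Nonempty X] {l : ℕ}
  (F : Finset (X → Bool)) (hF : F.Nonempty)

noncomputable def innerJ (D : Fin l → X) (S : Finset X)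
    (ε : Fin l → Bool) (σ : X → Bool) : ℝ :=
  F.sup' hF (fun f =>
    (1 / l : ℝ) * ∑ i, (if D i ∈ S then sgn (σ (D i)) else sgn (ε i)) * sgn (f (D i)))

noncomputable def Hfun (D : Fin l → X) : ℝ :=
  ((2 : ℝ) ^ l)⁻¹ * ∑ ε : Fin l → Bool,
    F.sup' hF (fun f => (1 / l : ℝ) * ∑ i, sgn (ε i) * sgn (f (D i)))

lemma JJ_step (hl : 1 ≤ l) (D : Fin l → X) {S : Finset X} {x : X} (hx : x ∉ S) :
    ∑ ε : Fin l → Bool, ∑ σ : X → Bool, innerJ F hF D S ε σ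
      ≤ ∑ ε : Fin l → Bool, ∑ σ : X → Bool, innerJ F hF D (insert x S) ε σ := by
  have hl0 : (0:ℝ) < l := by exact_mod_cast hl
  set m : ℝ := ((univ.filter fun i => D i = x).card : ℝ) with hm
  have hm0 : 0 ≤ m := by positivity
  set A : (Fin l → Bool) → (X → Bool) → (X → Bool) → ℝ := fun ε σ f =>
    (1 / l : ℝ) * ∑ i ∈ univ.filter (fun i => ¬ D i = x),
      (if D i ∈ S then sgn (σ (D i)) else sgn (ε i)) * sgn (f (D i)) with hA
  set T : (Fin l → Bool) → ℝ :=
    fun ε => ∑ i ∈ univ.filter (fun i => D i = x), sgn (ε i) with hT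
  set fε : (Fin l → Bool) → (Fin l → Bool) :=
    fun ε => fun i => if D i = x then !(ε i) else ε i with hfε
  set fσ : (X → Bool) → (X → Bool) :=
    fun σ => fun y => if y = x then !(σ y) else σ y with hfσ
  have hfεinv : Function.Involutive fε := by
    intro ε; funext i; by_cases h : D i = x <;> simp [hfε, h]
  have hfσinv : Function.Involutive fσ := by
    intro σ; funext y; by_cases h : y = x <;> simp [hfσ, h]
  -- split lemmas
  have hsplitS : ∀ ε σ, innerJ F hF D S ε σ
      = F.sup' hF (fun f => A ε σ f + (T ε / l) * sgn (f x)) := by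
    intro ε σ
    unfold innerJ
    apply Finset.sup'_congr hF rfl
    intro f _
    have hsum := Finset.sum_filter_add_sum_filter_not univ (fun i => D i = x)
      (fun i => (if D i ∈ S then sgn (σ (D i)) else sgn (ε i)) * sgn (f (D i)))
    rw [← hsum]
    have h2 : ∑ i ∈ univ.filter (fun i => D i = x),
        (if D i ∈ S then sgn (σ (D i)) else sgn (ε i)) * sgn (f (D i))
        = T ε * sgn (f x) := by
      rw [hT, Finset.sum_mul]
      apply Finset.sum_congr rfl
      intro i hi
      have hix : D i = x := (Finset.mem_filter.mp hi).2
      rw [hix, if_neg hx]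
    rw [h2, hA]
    ring
  have hsplitI : ∀ ε σ, innerJ F hF D (insert x S) ε σ
      = F.sup' hF (fun f => A ε σ f + (m / l * sgn (σ x)) * sgn (f x)) := by
    intro ε σ
    unfold innerJ
    apply Finset.sup'_congr hF rfl
    intro f _
    have hsum := Finset.sum_filter_add_sum_filter_not univ (fun i => D i = x)
      (fun i => (if D i ∈ insert x S then sgn (σ (D i)) else sgn (ε i)) * sgn (f (D i)))
    rw [← hsum]
    have h2 : ∑ i ∈ univ.filter (fun i => D i = x),
        (if D i ∈ insert x S then sgn (σ (D i)) else sgn (ε i)) * sgn (f (D i))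
        = m * sgn (σ x) * sgn (f x) := by
      have : ∀ i ∈ univ.filter (fun i => D i = x),
          (if D i ∈ insert x S then sgn (σ (D i)) else sgn (ε i)) * sgn (f (D i))
            = sgn (σ x) * sgn (f x) := by
        intro i hi
        have hix : D i = x := (Finset.mem_filter.mp hi).2
        rw [hix, if_pos (Finset.mem_insert_self x S)]
      rw [Finset.sum_congr rfl this, Finset.sum_const, hm, nsmul_eq_mul]
      ring
    have h1 : ∑ i ∈ univ.filter (fun i => ¬ D i = x),
        (if D i ∈ insert x S then sgn (σ (D i)) else sgn (ε i)) * sgn (f (D i))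
        = ∑ i ∈ univ.filter (fun i => ¬ D i = x),
        (if D i ∈ S then sgn (σ (D i)) else sgn (ε i)) * sgn (f (D i)) := by
      apply Finset.sum_congr rfl
      intro i hi
      have hix : ¬ D i = x := (Finset.mem_filter.mp hi).2
      congr 1
      by_cases hiS : D i ∈ S
      · rw [if_pos hiS, if_pos (Finset.mem_insert_of_mem hiS)]
      · rw [if_neg hiS, if_neg (by simp [Finset.mem_insert, hix, hiS])]
    rw [h2, h1, hA]
    ring
  -- A invariances
  have hAε : ∀ ε σ f, A (fε ε) σ f = A ε σ f := by
    intro ε σ f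
    simp only [hA]
    congr 1
    apply Finset.sum_congr rfl
    intro i hi
    have hix : ¬ D i = x := (Finset.mem_filter.mp hi).2
    by_cases hiS : D i ∈ S
    · rw [if_pos hiS, if_pos hiS]
    · rw [if_neg hiS, if_neg hiS]
      have : fε ε i = ε i := by rw [hfε]; simp [hix]
      rw [this]
  have hAσ : ∀ ε σ f, A ε (fσ σ) f = A ε σ f := by
    intro ε σ f
    simp only [hA]
    congr 1
    apply Finset.sum_congr rfl
    intro i hi
    have hix : ¬ D i = x := (Finset.mem_filter.mp hi).2
    by_cases hiS : D i ∈ S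
    · rw [if_pos hiS, if_pos hiS]
      have : fσ σ (D i) = σ (D i) := by rw [hfσ]; simp [hix]
      rw [this]
    · rw [if_neg hiS, if_neg hiS]
  have hTflip : ∀ ε, T (fε ε) = - T ε := by
    intro ε
    rw [show T (fε ε) = ∑ i ∈ univ.filter (fun i => D i = x), sgn (fε ε i) from rfl,
        show T ε = ∑ i ∈ univ.filter (fun i => D i = x), sgn (ε i) from rfl,
        ← Finset.sum_neg_distrib]
    apply Finset.sum_congr rfl
    intro i hi
    have hix : D i = x := (Finset.mem_filter.mp hi).2
    have : fε ε i = !(ε i) := by rw [hfε]; simp [hix]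
    rw [this, sgn_not]
  have hTb : ∀ ε, |T ε| ≤ m := by
    intro ε
    rw [hT]
    calc |∑ i ∈ univ.filter (fun i => D i = x), sgn (ε i)|
        ≤ ∑ i ∈ univ.filter (fun i => D i = x), |sgn (ε i)| :=
          Finset.abs_sum_le_sum_abs _ _
      _ = ∑ i ∈ univ.filter (fun i => D i = x), 1 := by
          apply Finset.sum_congr rfl; intro i _; rw [sgn_abs_eq]
      _ = m := by rw [Finset.sum_const, hm, nsmul_eq_mul, mul_one]
  -- the pointwise pairing inequality
  have hpair : ∀ ε σ, innerJ F hF D S ε σ + innerJ F hF D S (fε ε) σ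
      ≤ innerJ F hF D (insert x S) ε σ + innerJ F hF D (insert x S) ε (fσ σ) := by
    intro ε σ
    rw [hsplitS ε σ, hsplitS (fε ε) σ, hsplitI ε σ, hsplitI ε (fσ σ)]
    have e1 : F.sup' hF (fun f => A (fε ε) σ f + (T (fε ε) / l) * sgn (f x))
        = F.sup' hF (fun f => A ε σ f - (T ε / l) * sgn (f x)) := by
      apply Finset.sup'_congr hF rfl
      intro f _
      rw [hAε, hTflip]
      ring
    have e2 : F.sup' hF (fun f => A ε (fσ σ) f + (m / l * sgn (fσ σ x)) * sgn (f x))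
        = F.sup' hF (fun f => A ε σ f - (m / l * sgn (σ x)) * sgn (f x)) := by
      apply Finset.sup'_congr hF rfl
      intro f _
      rw [hAσ]
      have : fσ σ x = !(σ x) := by rw [hfσ]; simp
      rw [this, sgn_not]
      ring
    rw [e1, e2]
    have := sup'_pair_compare hF (A ε σ)
      (fun f => (T ε / l) * sgn (f x)) (fun f => (m / l * sgn (σ x)) * sgn (f x)) 0
      (by
        intro f _ g _
        rw [add_zero]
        have hrw : m / ↑l * sgn (σ x) * sgn (g x) - m / ↑l * sgn (σ x) * sgn (f x)
            = -(m / ↑l * sgn (σ x) * sgn (f x) - m / ↑l * sgn (σ x) * sgn (g x)) := by ring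
        rw [hrw, ← abs_eq_max_neg]
        have hd2 : m / ↑l * sgn (σ x) * sgn (f x) - m / ↑l * sgn (σ x) * sgn (g x)
            = m / ↑l * sgn (σ x) * (sgn (f x) - sgn (g x)) := by ring
        rw [hd2]
        calc T ε / ↑l * sgn (f x) - T ε / ↑l * sgn (g x)
            = T ε / ↑l * (sgn (f x) - sgn (g x)) := by ring
          _ ≤ |T ε / ↑l * (sgn (f x) - sgn (g x))| := le_abs_self _
          _ = |T ε| / ↑l * |sgn (f x) - sgn (g x)| := by
              rw [abs_mul, abs_div, abs_of_pos hl0]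
          _ ≤ m / ↑l * |sgn (f x) - sgn (g x)| := by
              gcongr
              exact hTb ε
          _ = |m / ↑l * sgn (σ x) * (sgn (f x) - sgn (g x))| := by
              rw [abs_mul, abs_mul, sgn_abs_eq,
                abs_of_nonneg (by positivity : (0:ℝ) ≤ m / ↑l)]
              ring)
    rw [add_zero] at this
    exact this
  -- sum assembly
  have h1 : ∑ ε : Fin l → Bool, ∑ σ : X → Bool, innerJ F hF D S (fε ε) σ
      = ∑ ε : Fin l → Bool, ∑ σ : X → Bool, innerJ F hF D S ε σ :=
    sum_flip fε hfεinv (fun ε => ∑ σ : X → Bool, innerJ F hF D S ε σ)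
  have h2 : ∑ ε : Fin l → Bool, ∑ σ : X → Bool, innerJ F hF D (insert x S) ε (fσ σ)
      = ∑ ε : Fin l → Bool, ∑ σ : X → Bool, innerJ F hF D (insert x S) ε σ := by
    apply Finset.sum_congr rfl
    intro ε _
    exact sum_flip fσ hfσinv (fun σ => innerJ F hF D (insert x S) ε σ)
  have hkey : ∑ ε : Fin l → Bool, ∑ σ : X → Bool,
        (innerJ F hF D S ε σ + innerJ F hF D S (fε ε) σ)
      ≤ ∑ ε : Fin l → Bool, ∑ σ : X → Bool,
        (innerJ F hF D (insert x S) ε σ + innerJ F hF D (insert x S) ε (fσ σ)) := by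
    apply Finset.sum_le_sum
    intro ε _
    apply Finset.sum_le_sum
    intro σ _
    exact hpair ε σ
  simp only [Finset.sum_add_distrib] at hkey
  rw [h1] at hkey
  rw [h2] at hkey
  linarith

lemma Hfun_le_Gfun (hl : 1 ≤ l) (D : Fin l → X) :
    Hfun F hF D ≤ Gfun F hF D := by
  classical
  have hmono : ∀ S : Finset X,
      (∑ ε : Fin l → Bool, ∑ σ : X → Bool, innerJ F hF D ∅ ε σ)
        ≤ ∑ ε : Fin l → Bool, ∑ σ : X → Bool, innerJ F hF D S ε σ := by
    intro S
    induction S using Finset.induction_on with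
    | empty => exact le_refl _
    | @insert x S hxS ih => exact le_trans ih (JJ_step F hF hl D hxS)
  have hJ0 : ∑ ε : Fin l → Bool, ∑ σ : X → Bool, innerJ F hF D ∅ ε σ
      = (Fintype.card (X → Bool) : ℝ) * ∑ ε : Fin l → Bool,
          F.sup' hF (fun f => (1 / l : ℝ) * ∑ i, sgn (ε i) * sgn (f (D i))) := by
    rw [Finset.mul_sum]
    apply Finset.sum_congr rfl
    intro ε _
    have hc : ∀ σ : X → Bool, innerJ F hF D ∅ ε σ
        = F.sup' hF (fun f => (1 / l : ℝ) * ∑ i, sgn (ε i) * sgn (f (D i))) := by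
      intro σ
      unfold innerJ
      apply Finset.sup'_congr hF rfl
      intro f _
      congr 1
    rw [Finset.sum_congr rfl (fun σ _ => hc σ), Finset.sum_const, card_univ, nsmul_eq_mul]
  have hJu : ∑ ε : Fin l → Bool, ∑ σ : X → Bool, innerJ F hF D Finset.univ ε σ
      = (2 : ℝ) ^ l * ∑ σ : X → Bool, F.sup' hF (fun f => corr D σ f) := by
    have hc : ∀ (ε : Fin l → Bool) (σ : X → Bool),
        innerJ F hF D Finset.univ ε σ = F.sup' hF (fun f => corr D σ f) := by
      intro ε σ
      unfold innerJ corr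
      apply Finset.sup'_congr hF rfl
      intro f _
      congr 1
      apply Finset.sum_congr rfl
      intro i _
      rw [if_pos (Finset.mem_univ _)]
    rw [Finset.sum_congr rfl
      (fun ε _ => Finset.sum_congr rfl (fun σ _ => hc ε σ))]
    rw [Finset.sum_const, card_univ, nsmul_eq_mul]
    congr 1
    simp [Fintype.card_fun]
  have h := hmono Finset.univ
  rw [hJ0, hJu] at h
  have hN : (0:ℝ) < (Fintype.card (X → Bool) : ℝ) := by exact_mod_cast Fintype.card_pos
  have h2 : (0:ℝ) < (2:ℝ) ^ l := by positivity
  unfold Hfun Gfun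
  rw [inv_mul_le_iff₀ h2, ← mul_le_mul_iff_right₀ hN]
  calc (Fintype.card (X → Bool) : ℝ) *
        ∑ ε : Fin l → Bool,
          F.sup' hF (fun f => (1 / l : ℝ) * ∑ i, sgn (ε i) * sgn (f (D i)))
      ≤ (2:ℝ) ^ l * ∑ σ : X → Bool, F.sup' hF (fun f => corr D σ f) := h
    _ = (Fintype.card (X → Bool) : ℝ) * ((2:ℝ) ^ l *
          ((Fintype.card (X → Bool) : ℝ)⁻¹ *
            ∑ σ : X → Bool, F.sup' hF (fun f => corr D σ f))) := by
        field_simp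
end HG

section BD
variable {X : Type*} [Fintype X] [Nonempty X] {l : ℕ}
  (F : Finset (X → Bool)) (hF : F.Nonempty)

noncomputable def phiF (p : X → ℝ) (σs : X → Bool) (D : Fin l → X) : ℝ :=
  F.sup' hF (fun f => risk p σs f - empRisk f D (fun i => σs (D i)))

lemma phiF_bdd (p : X → ℝ) (σs : X → Bool) (hl : 1 ≤ l)
    (j : Fin l) (D : Fin l → X) (x y : X) :
    phiF F hF p σs (Function.update D j x) - phiF F hF p σs (Function.update D j y)
      ≤ 1 / l := by
  have hl0 : (0:ℝ) < l := by exact_mod_cast hl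
  set D1 := Function.update D j x with hD1
  set D2 := Function.update D j y with hD2
  unfold phiF
  refine le_trans (sup'_sub_le hF _ _) ?_
  apply Finset.sup'_le
  intro f _
  have hexp : (risk p σs f - empRisk f D1 (fun i => σs (D1 i)))
      - (risk p σs f - empRisk f D2 (fun i => σs (D2 i)))
      = (1 / l : ℝ) * ∑ i : Fin l,
          ((if f (D2 i) ≠ σs (D2 i) then (1:ℝ) else 0)
            - (if f (D1 i) ≠ σs (D1 i) then (1:ℝ) else 0)) := by
    unfold empRisk
    rw [Finset.sum_sub_distrib]
    ring
  rw [hexp]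
  have hsum : ∑ i : Fin l,
      ((if f (D2 i) ≠ σs (D2 i) then (1:ℝ) else 0)
        - (if f (D1 i) ≠ σs (D1 i) then (1:ℝ) else 0)) ≤ 1 := by
    calc ∑ i : Fin l, ((if f (D2 i) ≠ σs (D2 i) then (1:ℝ) else 0)
            - (if f (D1 i) ≠ σs (D1 i) then (1:ℝ) else 0))
        ≤ ∑ i : Fin l, (if i = j then (1:ℝ) else 0) := by
          apply Finset.sum_le_sum
          intro i _
          by_cases hij : i = j
          · rw [if_pos hij]
            have h2 : (if f (D2 i) ≠ σs (D2 i) then (1:ℝ) else 0) ≤ 1 := by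
              split <;> norm_num
            have h1 : (0:ℝ) ≤ (if f (D1 i) ≠ σs (D1 i) then (1:ℝ) else 0) := by
              split <;> norm_num
            linarith
          · rw [if_neg hij]
            have e1 : D1 i = D i := Function.update_of_ne hij x D
            have e2 : D2 i = D i := Function.update_of_ne hij y D
            rw [e1, e2]
            simp
      _ = 1 := by simp
  calc (1 / l : ℝ) * ∑ i : Fin l, _ ≤ (1 / l : ℝ) * 1 :=
        mul_le_mul_of_nonneg_left hsum (by positivity)
    _ = 1 / l := mul_one _

lemma Hfun_bdd (hl : 1 ≤ l) (j : Fin l) (D : Fin l → X) (x y : X) :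
    Hfun F hF (Function.update D j x) - Hfun F hF (Function.update D j y)
      ≤ 1 / l := by
  have hl0 : (0:ℝ) < l := by exact_mod_cast hl
  set D1 := Function.update D j x with hD1
  set D2 := Function.update D j y with hD2
  set e : (Fin l → Bool) → (Fin l → Bool) :=
    fun ε => Function.update ε j (!(ε j)) with he
  have heinv : Function.Involutive e := by
    intro ε
    funext i
    by_cases hij : i = j
    · subst hij
      simp [he]
    · simp [he, Function.update_of_ne hij]
  have hej : ∀ ε, sgn (e ε j) = - sgn (ε j) := by
    intro ε
    have : e ε j = !(ε j) := Function.update_self j _ ε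
    rw [this, sgn_not]
  have he_ne : ∀ (ε : Fin l → Bool) (i : Fin l), i ≠ j → e ε i = ε i :=
    fun ε i hij => Function.update_of_ne hij _ ε
  have hD21 : ∀ i : Fin l, i ≠ j → D2 i = D1 i := by
    intro i hij
    rw [hD1, hD2, Function.update_of_ne hij x D, Function.update_of_ne hij y D]
  -- splitting
  have hsplit : ∀ (DD : Fin l → X) (ε : Fin l → Bool) (f : X → Bool),
      (1 / l : ℝ) * ∑ i, sgn (ε i) * sgn (f (DD i))
        = (1 / l : ℝ) * (∑ i ∈ univ.erase j, sgn (ε i) * sgn (f (DD i)))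
          + (sgn (ε j) / l) * sgn (f (DD j)) := by
    intro DD ε f
    rw [← Finset.sum_erase_add univ _ (mem_univ j)]
    ring
  have hAA : ∀ (ε ε' : Fin l → Bool) (DD : Fin l → X) (f : X → Bool),
      (∀ i : Fin l, i ≠ j → ε' i = ε i) → (∀ i : Fin l, i ≠ j → DD i = D1 i) →
      (1 / l : ℝ) * (∑ i ∈ univ.erase j, sgn (ε' i) * sgn (f (DD i)))
        = (1 / l : ℝ) * (∑ i ∈ univ.erase j, sgn (ε i) * sgn (f (D1 i))) := by
    intro ε ε' DD f hε hDD
    congr 1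
    apply Finset.sum_congr rfl
    intro i hi
    have hij : i ≠ j := (Finset.mem_erase.mp hi).1
    rw [hε i hij, hDD i hij]
  set v1 : (Fin l → Bool) → ℝ := fun ε =>
    F.sup' hF (fun f => (1 / l : ℝ) * ∑ i, sgn (ε i) * sgn (f (D1 i))) with hv1
  set v2 : (Fin l → Bool) → ℝ := fun ε =>
    F.sup' hF (fun f => (1 / l : ℝ) * ∑ i, sgn (ε i) * sgn (f (D2 i))) with hv2
  have hpair : ∀ ε, v1 ε + v1 (e ε) ≤ v2 ε + v2 (e ε) + 2 / l := by
    intro ε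
    set AA : (X → Bool) → ℝ := fun f =>
      (1 / l : ℝ) * (∑ i ∈ univ.erase j, sgn (ε i) * sgn (f (D1 i))) with hAAdef
    have e11 : v1 ε = F.sup' hF (fun f => AA f + (sgn (ε j) / l) * sgn (f (D1 j))) := by
      apply Finset.sup'_congr hF rfl
      intro f _
      rw [hsplit D1 ε f]
    have e12 : v1 (e ε) = F.sup' hF (fun f => AA f - (sgn (ε j) / l) * sgn (f (D1 j))) := by
      apply Finset.sup'_congr hF rfl
      intro f _
      rw [hsplit D1 (e ε) f, hAA ε (e ε) D1 f (he_ne ε) (fun _ _ => rfl), hej ε]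
      ring
    have e21 : v2 ε = F.sup' hF (fun f => AA f + (sgn (ε j) / l) * sgn (f (D2 j))) := by
      apply Finset.sup'_congr hF rfl
      intro f _
      rw [hsplit D2 ε f, hAA ε ε D2 f (fun _ _ => rfl) hD21]
    have e22 : v2 (e ε) = F.sup' hF (fun f => AA f - (sgn (ε j) / l) * sgn (f (D2 j))) := by
      apply Finset.sup'_congr hF rfl
      intro f _
      rw [hsplit D2 (e ε) f, hAA ε (e ε) D2 f (he_ne ε) hD21, hej ε]
      ring
    rw [e11, e12, e21, e22]
    apply sup'_pair_compare hF AA _ _ (2 / l)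
    intro f _ g _
    have hmax : (0:ℝ) ≤ max ((sgn (ε j) / l) * sgn (f (D2 j)) - (sgn (ε j) / l) * sgn (g (D2 j)))
        ((sgn (ε j) / l) * sgn (g (D2 j)) - (sgn (ε j) / l) * sgn (f (D2 j))) := by
      rcases le_total 0 ((sgn (ε j) / l) * sgn (f (D2 j)) - (sgn (ε j) / l) * sgn (g (D2 j))) with hc | hc
      · exact le_max_of_le_left hc
      · exact le_max_of_le_right (by linarith)
    have hub : (sgn (ε j) / l) * sgn (f (D1 j)) - (sgn (ε j) / l) * sgn (g (D1 j)) ≤ 2 / l := by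
      have haf := abs_le.mp (le_of_eq (sgn_abs_eq (f (D1 j))))
      have hag := abs_le.mp (le_of_eq (sgn_abs_eq (g (D1 j))))
      have h1 : (sgn (ε j) / l) * sgn (f (D1 j)) - (sgn (ε j) / l) * sgn (g (D1 j))
          = (sgn (ε j) / l) * (sgn (f (D1 j)) - sgn (g (D1 j))) := by ring
      rw [h1]
      calc (sgn (ε j) / l) * (sgn (f (D1 j)) - sgn (g (D1 j)))
          ≤ |(sgn (ε j) / l) * (sgn (f (D1 j)) - sgn (g (D1 j)))| := le_abs_self _
        _ = |sgn (ε j)| / l * |sgn (f (D1 j)) - sgn (g (D1 j))| := by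
            rw [abs_mul, abs_div, abs_of_pos hl0]
        _ ≤ 1 / l * 2 := by
            rw [sgn_abs_eq]
            apply mul_le_mul_of_nonneg_left _ (by positivity)
            rw [abs_le]
            exact ⟨by linarith [haf.1, haf.2, hag.1, hag.2],
                   by linarith [haf.1, haf.2, hag.1, hag.2]⟩
        _ = 2 / l := by ring
    linarith
  have hflip1 : ∑ ε : Fin l → Bool, v1 (e ε) = ∑ ε : Fin l → Bool, v1 ε :=
    sum_flip e heinv v1
  have hflip2 : ∑ ε : Fin l → Bool, v2 (e ε) = ∑ ε : Fin l → Bool, v2 ε :=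
    sum_flip e heinv v2
  have hsum : ∑ ε : Fin l → Bool, (v1 ε + v1 (e ε))
      ≤ ∑ ε : Fin l → Bool, (v2 ε + v2 (e ε) + 2 / l) :=
    Finset.sum_le_sum fun ε _ => hpair ε
  rw [Finset.sum_add_distrib, hflip1] at hsum
  rw [Finset.sum_add_distrib, Finset.sum_add_distrib, hflip2, Finset.sum_const,
    card_univ, nsmul_eq_mul] at hsum
  have hcard : (Fintype.card (Fin l → Bool) : ℝ) = (2:ℝ) ^ l := by
    simp [Fintype.card_fun]
  rw [hcard] at hsum
  have h2l : (0:ℝ) < (2:ℝ) ^ l := by positivity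
  unfold Hfun
  have hv1e : ∑ ε : Fin l → Bool,
      F.sup' hF (fun f => (1 / l : ℝ) * ∑ i, sgn (ε i) * sgn (f (D1 i)))
      = ∑ ε : Fin l → Bool, v1 ε := rfl
  have hv2e : ∑ ε : Fin l → Bool,
      F.sup' hF (fun f => (1 / l : ℝ) * ∑ i, sgn (ε i) * sgn (f (D2 i)))
      = ∑ ε : Fin l → Bool, v2 ε := rfl
  rw [hv1e, hv2e]
  have hdiff : (∑ ε : Fin l → Bool, v1 ε) - (∑ ε : Fin l → Bool, v2 ε)
      ≤ (2:ℝ) ^ l * (1 / l) := by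
    have hC : (2:ℝ)^l * (2 / (l:ℝ)) = 2 * ((2:ℝ)^l * (1 / (l:ℝ))) := by ring
    linarith [hC]
  calc ((2:ℝ)^l)⁻¹ * (∑ ε : Fin l → Bool, v1 ε)
        - ((2:ℝ)^l)⁻¹ * (∑ ε : Fin l → Bool, v2 ε)
      = ((2:ℝ)^l)⁻¹ * ((∑ ε : Fin l → Bool, v1 ε) - (∑ ε : Fin l → Bool, v2 ε)) := by
        ring
    _ ≤ ((2:ℝ)^l)⁻¹ * ((2:ℝ)^l * (1 / l)) :=
        mul_le_mul_of_nonneg_left hdiff (by positivity)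
    _ = 1 / l := by field_simp
end BD

section Sym
variable {X : Type*} [Fintype X] [Nonempty X] {l : ℕ}
  (F : Finset (X → Bool)) (hF : F.Nonempty)

noncomputable def cind (σs f : X → Bool) (x : X) : ℝ := if f x ≠ σs x then 1 else 0

noncomputable def Kfun (σs : X → Bool) (D : Fin l → X) : ℝ :=
  ((2 : ℝ) ^ l)⁻¹ * ∑ ε : Fin l → Bool,
    F.sup' hF (fun f => (1 / l : ℝ) * ∑ i, sgn (ε i) * cind σs f (D i))

variable (p : X → ℝ) (σs : X → Bool)

lemma emp_eq (f : X → Bool) (D : Fin l → X) :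
    empRisk f D (fun i => σs (D i)) = (1 / l : ℝ) * ∑ i, cind σs f (D i) := rfl

lemma cind_eq (f : X → Bool) (x : X) :
    2 * cind σs f x = 1 - sgn (f x) * sgn (σs x) := by
  cases hf : f x <;> cases hs : σs x <;> simp [cind, sgn, hf, hs] <;> norm_num

lemma risk_eq (f : X → Bool) : risk p σs f = ∑ x, p x * cind σs f x := by
  unfold risk cind
  apply Finset.sum_congr rfl
  intro x _
  ring

lemma sum_sgn_zero (i : Fin l) : ∑ ε : Fin l → Bool, sgn (ε i) = 0 := by
  set e : (Fin l → Bool) → (Fin l → Bool) := fun ε => Function.update ε i (!(ε i)) with he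
  have heinv : Function.Involutive e := by
    intro ε
    funext k
    by_cases hk : k = i
    · subst hk; simp [he]
    · simp [he, Function.update_of_ne hk]
  have h1 := sum_flip e heinv (fun ε => sgn (ε i))
  have h2 : ∀ ε : Fin l → Bool, sgn (e ε i) = - sgn (ε i) := by
    intro ε
    have : e ε i = !(ε i) := Function.update_self i _ ε
    rw [this, sgn_not]
  rw [Finset.sum_congr rfl (fun ε _ => h2 ε), Finset.sum_neg_distrib] at h1
  linarith

lemma two_K_eq_H (hl : 1 ≤ l) (D : Fin l → X) :
    2 * Kfun F hF σs D = Hfun F hF D := by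
  have hl0 : (0:ℝ) < l := by exact_mod_cast hl
  set e2 : (Fin l → Bool) → (Fin l → Bool) :=
    fun ε => fun i => if σs (D i) then ε i else !(ε i) with he2
  have he2inv : Function.Involutive e2 := by
    intro ε
    funext i
    by_cases hs : σs (D i) <;> simp [he2, hs]
  have hse2 : ∀ (ε : Fin l → Bool) (i : Fin l),
      sgn (e2 ε i) = - sgn (ε i) * sgn (σs (D i)) := by
    intro ε i
    by_cases hs : σs (D i)
    · have : e2 ε i = ε i := by simp [he2, hs]
      rw [this, hs]
      simp [sgn]
    · have : e2 ε i = !(ε i) := by simp [he2, hs]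
      rw [this, sgn_not]
      have : σs (D i) = false := by simp [hs]
      rw [this]
      simp [sgn]
  have hstep : ∀ ε : Fin l → Bool,
      2 * F.sup' hF (fun f => (1 / l : ℝ) * ∑ i, sgn (ε i) * cind σs f (D i))
        = ((1 / l : ℝ) * ∑ i, sgn (ε i))
          + F.sup' hF (fun f => (1 / l : ℝ) * ∑ i, sgn (e2 ε i) * sgn (f (D i))) := by
    intro ε
    rw [← sup'_const_mul hF 2 (by norm_num), ← sup'_const_add hF]
    apply Finset.sup'_congr hF rfl
    intro f _
    have hterm : ∀ i : Fin l, 2 * (sgn (ε i) * cind σs f (D i))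
        = sgn (ε i) + sgn (e2 ε i) * sgn (f (D i)) := by
      intro i
      have h2c := cind_eq σs f (D i)
      rw [hse2 ε i]
      linear_combination sgn (ε i) * h2c
    calc 2 * ((1 / l : ℝ) * ∑ i, sgn (ε i) * cind σs f (D i))
        = (1 / l : ℝ) * ∑ i, 2 * (sgn (ε i) * cind σs f (D i)) := by
          rw [Finset.mul_sum, Finset.mul_sum, Finset.mul_sum]
          exact Finset.sum_congr rfl (fun i _ => by ring)
      _ = (1 / l : ℝ) * ∑ i, (sgn (ε i) + sgn (e2 ε i) * sgn (f (D i))) := by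
          rw [Finset.sum_congr rfl (fun i _ => hterm i)]
      _ = ((1 / l : ℝ) * ∑ i, sgn (ε i))
          + (1 / l : ℝ) * ∑ i, sgn (e2 ε i) * sgn (f (D i)) := by
          rw [Finset.sum_add_distrib]
          ring
  have hzero : ∑ ε : Fin l → Bool, ((1 / l : ℝ) * ∑ i, sgn (ε i)) = 0 := by
    rw [← Finset.mul_sum, Finset.sum_comm]
    rw [Finset.sum_congr rfl (fun i (_ : i ∈ univ) => sum_sgn_zero i)]
    simp
  have hflip : ∑ ε : Fin l → Bool,
      F.sup' hF (fun f => (1 / l : ℝ) * ∑ i, sgn (e2 ε i) * sgn (f (D i)))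
      = ∑ ε : Fin l → Bool,
      F.sup' hF (fun f => (1 / l : ℝ) * ∑ i, sgn (ε i) * sgn (f (D i))) :=
    sum_flip e2 he2inv
      (fun ε => F.sup' hF (fun f => (1 / l : ℝ) * ∑ i, sgn (ε i) * sgn (f (D i))))
  unfold Kfun Hfun
  rw [show (2:ℝ) * (((2:ℝ)^l)⁻¹ * ∑ ε : Fin l → Bool,
      F.sup' hF (fun f => (1 / l : ℝ) * ∑ i, sgn (ε i) * cind σs f (D i)))
    = ((2:ℝ)^l)⁻¹ * ∑ ε : Fin l → Bool,
      2 * F.sup' hF (fun f => (1 / l : ℝ) * ∑ i, sgn (ε i) * cind σs f (D i)) by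
        rw [Finset.mul_sum, Finset.mul_sum, Finset.mul_sum]
        exact Finset.sum_congr rfl (fun ε _ => by ring)]
  rw [Finset.sum_congr rfl (fun ε _ => hstep ε), Finset.sum_add_distrib, hzero, hflip,
    zero_add]

lemma risk_as_E (hp1 : ∑ x, p x = 1) (hl : 1 ≤ l) (f : X → Bool) :
    risk p σs f = ∑ D' : Fin l → X, (∏ i, p (D' i)) * empRisk f D' (fun i => σs (D' i)) := by
  have hl0 : (l:ℝ) ≠ 0 := by positivity
  symm
  have h1 : ∀ D' : Fin l → X, (∏ i, p (D' i)) * empRisk f D' (fun i => σs (D' i))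
      = ∑ i : Fin l, (1 / l : ℝ) * ((∏ j, p (D' j)) * cind σs f (D' i)) := by
    intro D'
    rw [emp_eq σs f D', ← Finset.mul_sum, ← Finset.mul_sum]
    ring
  rw [Finset.sum_congr rfl (fun D' _ => h1 D'), Finset.sum_comm]
  have h2 : ∀ i : Fin l, ∑ D' : Fin l → X,
      (1 / l : ℝ) * ((∏ j, p (D' j)) * cind σs f (D' i)) = (1 / l : ℝ) * risk p σs f := by
    intro i
    rw [← Finset.mul_sum, marginal p hp1 i (cind σs f), ← risk_eq]
  rw [Finset.sum_congr rfl (fun i _ => h2 i), Finset.sum_const, card_univ,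
    Fintype.card_fin, nsmul_eq_mul]
  field_simp

lemma symmetrization (hp : ∀ x, 0 ≤ p x) (hp1 : ∑ x, p x = 1) (hl : 1 ≤ l) :
    ∑ D : Fin l → X, (∏ i, p (D i)) * phiF F hF p σs D
      ≤ ∑ D : Fin l → X, (∏ i, p (D i)) * Hfun F hF D := by
  have hl0 : (0:ℝ) < l := by exact_mod_cast hl
  have h2l : (0:ℝ) < (2:ℝ) ^ l := by positivity
  set W : (Fin l → X) → ℝ := fun D => ∏ i, p (D i) with hW
  have hW0 : ∀ D, 0 ≤ W D := fun D => Finset.prod_nonneg fun i _ => hp (D i)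
  have hWs : ∑ D : Fin l → X, W D = 1 := sum_W p hp1 l
  set Φ : (Fin l → X) → (Fin l → X) → ℝ := fun Da Db =>
    F.sup' hF (fun f => empRisk f Db (fun i => σs (Db i))
      - empRisk f Da (fun i => σs (Da i))) with hΦ
  -- Step 2
  have hstep2 : ∑ D : Fin l → X, W D * phiF F hF p σs D
      ≤ ∑ D : Fin l → X, W D * (∑ D' : Fin l → X, W D' * Φ D D') := by
    apply Finset.sum_le_sum
    intro D _
    apply mul_le_mul_of_nonneg_left _ (hW0 D)
    unfold phiF
    have hrw : ∀ f ∈ F, risk p σs f - empRisk f D (fun i => σs (D i))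
        = ∑ D' : Fin l → X, W D' * (empRisk f D' (fun i => σs (D' i))
            - empRisk f D (fun i => σs (D i))) := by
      intro f _
      have hR := risk_as_E p σs hp1 hl f
      rw [show (∑ D' : Fin l → X, (∏ i, p (D' i)) * empRisk f D' (fun i => σs (D' i)))
          = (∑ D' : Fin l → X, W D' * empRisk f D' (fun i => σs (D' i))) from rfl] at hR
      rw [hR]
      conv_lhs => rw [show empRisk f D (fun i => σs (D i))
          = (∑ D' : Fin l → X, W D') * empRisk f D (fun i => σs (D i)) by
        rw [hWs, one_mul]]
      rw [Finset.sum_mul, ← Finset.sum_sub_distrib]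
      apply Finset.sum_congr rfl
      intro D' _
      ring
    rw [Finset.sup'_congr hF rfl hrw]
    exact sup'_sum_le hF univ W (fun D' _ => hW0 D') _
  -- product form
  have hq : ∑ D : Fin l → X, W D * (∑ D' : Fin l → X, W D' * Φ D D')
      = ∑ q : (Fin l → X) × (Fin l → X), (W q.1 * W q.2) * Φ q.1 q.2 := by
    rw [Fintype.sum_prod_type]
    apply Finset.sum_congr rfl
    intro D _
    rw [Finset.mul_sum]
    apply Finset.sum_congr rfl
    intro D' _
    ring
  -- Φg
  set Φg : (Fin l → Bool) → (Fin l → X) → (Fin l → X) → ℝ := fun ε Da Db =>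
    F.sup' hF (fun f => (1 / l : ℝ) * ∑ i,
      sgn (ε i) * (cind σs f (Db i) - cind σs f (Da i))) with hΦg
  have hΦ0 : ∀ Da Db, Φ Da Db = Φg (fun _ => false) Da Db := by
    intro Da Db
    apply Finset.sup'_congr hF rfl
    intro f _
    rw [emp_eq σs f Db, emp_eq σs f Da, ← mul_sub, ← Finset.sum_sub_distrib]
    congr 1
    apply Finset.sum_congr rfl
    intro i _
    rw [show sgn false = (1:ℝ) from rfl]
    ring
  have hswap : ∀ ε : Fin l → Bool,
      ∑ q : (Fin l → X) × (Fin l → X), (W q.1 * W q.2) * Φ q.1 q.2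
        = ∑ q : (Fin l → X) × (Fin l → X), (W q.1 * W q.2) * Φg ε q.1 q.2 := by
    intro ε
    set eq : (Fin l → X) × (Fin l → X) → (Fin l → X) × (Fin l → X) := fun q =>
      (fun i => if ε i then q.2 i else q.1 i,
       fun i => if ε i then q.1 i else q.2 i) with heq
    have heinv : Function.Involutive eq := by
      intro q
      apply Prod.ext <;> funext i <;> by_cases h : ε i <;> simp [heq, h]
    have hWe : ∀ q : (Fin l → X) × (Fin l → X),
        W (eq q).1 * W (eq q).2 = W q.1 * W q.2 := by
      intro q
      rw [show W (eq q).1 * W (eq q).2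
          = ∏ i, (p ((eq q).1 i) * p ((eq q).2 i)) from (Finset.prod_mul_distrib).symm,
        show W q.1 * W q.2 = ∏ i, (p (q.1 i) * p (q.2 i)) from
          (Finset.prod_mul_distrib).symm]
      apply Finset.prod_congr rfl
      intro i _
      by_cases h : ε i <;> simp [heq, h, mul_comm]
    have hΦe : ∀ q : (Fin l → X) × (Fin l → X),
        Φ (eq q).1 (eq q).2 = Φg ε q.1 q.2 := by
      intro q
      rw [hΦ0]
      apply Finset.sup'_congr hF rfl
      intro f _
      congr 1
      apply Finset.sum_congr rfl
      intro i _
      by_cases h : ε i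
      · have h1 : (eq q).1 i = q.2 i := by simp [heq, h]
        have h2 : (eq q).2 i = q.1 i := by simp [heq, h]
        rw [h1, h2, show sgn false = (1:ℝ) from rfl,
          show ε i = true from h, show sgn true = (-1:ℝ) from rfl]
        ring
      · have h1 : (eq q).1 i = q.1 i := by simp [heq, h]
        have h2 : (eq q).2 i = q.2 i := by simp [heq, h]
        rw [h1, h2, show sgn false = (1:ℝ) from rfl,
          show ε i = false from by simp [h], show sgn false = (1:ℝ) from rfl]
    calc ∑ q : (Fin l → X) × (Fin l → X), (W q.1 * W q.2) * Φ q.1 q.2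
        = ∑ q : (Fin l → X) × (Fin l → X),
            (W (eq q).1 * W (eq q).2) * Φ (eq q).1 (eq q).2 :=
          (sum_flip eq heinv (fun q => (W q.1 * W q.2) * Φ q.1 q.2)).symm
      _ = ∑ q : (Fin l → X) × (Fin l → X), (W q.1 * W q.2) * Φg ε q.1 q.2 := by
          apply Finset.sum_congr rfl
          intro q _
          rw [hWe, hΦe]
  have hcard : (Fintype.card (Fin l → Bool) : ℝ) = (2:ℝ) ^ l := by
    simp [Fintype.card_fun]
  have havg : ∑ q : (Fin l → X) × (Fin l → X), (W q.1 * W q.2) * Φ q.1 q.2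
      = ∑ q : (Fin l → X) × (Fin l → X), (W q.1 * W q.2) *
          (((2:ℝ)^l)⁻¹ * ∑ ε : Fin l → Bool, Φg ε q.1 q.2) := by
    have h1 : ∑ ε : Fin l → Bool, ∑ q : (Fin l → X) × (Fin l → X),
        (W q.1 * W q.2) * Φg ε q.1 q.2
        = ∑ ε : Fin l → Bool, ∑ q : (Fin l → X) × (Fin l → X),
            (W q.1 * W q.2) * Φ q.1 q.2 :=
      Finset.sum_congr rfl (fun ε _ => (hswap ε).symm)
    rw [Finset.sum_const, card_univ, nsmul_eq_mul, hcard] at h1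
    rw [show ∑ q : (Fin l → X) × (Fin l → X), (W q.1 * W q.2) *
          (((2:ℝ)^l)⁻¹ * ∑ ε : Fin l → Bool, Φg ε q.1 q.2)
        = ((2:ℝ)^l)⁻¹ * ∑ q : (Fin l → X) × (Fin l → X), ∑ ε : Fin l → Bool,
            (W q.1 * W q.2) * Φg ε q.1 q.2 by
      rw [Finset.mul_sum]
      apply Finset.sum_congr rfl
      intro q _
      rw [Finset.mul_sum, Finset.mul_sum, Finset.mul_sum]
      exact Finset.sum_congr rfl (fun ε _ => by ring)]
    rw [Finset.sum_comm, h1]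
    field_simp
  -- pointwise bound on the average
  have hKbound : ∀ q : (Fin l → X) × (Fin l → X),
      ((2:ℝ)^l)⁻¹ * ∑ ε : Fin l → Bool, Φg ε q.1 q.2
        ≤ Kfun F hF σs q.2 + Kfun F hF σs q.1 := by
    intro q
    have hsplitΦ : ∀ ε : Fin l → Bool, Φg ε q.1 q.2
        ≤ F.sup' hF (fun f => (1 / l : ℝ) * ∑ i, sgn (ε i) * cind σs f (q.2 i))
          + F.sup' hF (fun f => (1 / l : ℝ) * ∑ i, - sgn (ε i) * cind σs f (q.1 i)) := by
      intro ε
      have he : Φg ε q.1 q.2 = F.sup' hF (fun f =>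
          ((1 / l : ℝ) * ∑ i, sgn (ε i) * cind σs f (q.2 i))
            + ((1 / l : ℝ) * ∑ i, - sgn (ε i) * cind σs f (q.1 i))) := by
        apply Finset.sup'_congr hF rfl
        intro f _
        rw [← mul_add, ← Finset.sum_add_distrib]
        congr 1
        apply Finset.sum_congr rfl
        intro i _
        ring
      rw [he]
      exact sup'_add_le hF _ _
    have hflipneg : ∑ ε : Fin l → Bool,
        F.sup' hF (fun f => (1 / l : ℝ) * ∑ i, - sgn (ε i) * cind σs f (q.1 i))
        = ∑ ε : Fin l → Bool,
        F.sup' hF (fun f => (1 / l : ℝ) * ∑ i, sgn (ε i) * cind σs f (q.1 i)) := by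
      have hni : Function.Involutive (fun ε : Fin l → Bool => fun i => !(ε i)) :=
        fun ε => funext fun i => Bool.not_not _
      have hh := sum_flip (fun ε : Fin l → Bool => fun i => !(ε i)) hni
        (fun ε => F.sup' hF (fun f => (1 / l : ℝ) * ∑ i, sgn (ε i) * cind σs f (q.1 i)))
      rw [← hh]
      apply Finset.sum_congr rfl
      intro ε _
      apply Finset.sup'_congr hF rfl
      intro f _
      congr 1
      apply Finset.sum_congr rfl
      intro i _
      rw [show sgn (!(ε i)) = - sgn (ε i) from sgn_not (ε i)]
    calc ((2:ℝ)^l)⁻¹ * ∑ ε : Fin l → Bool, Φg ε q.1 q.2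
        ≤ ((2:ℝ)^l)⁻¹ * ∑ ε : Fin l → Bool,
            (F.sup' hF (fun f => (1 / l : ℝ) * ∑ i, sgn (ε i) * cind σs f (q.2 i))
              + F.sup' hF (fun f => (1 / l : ℝ) * ∑ i, - sgn (ε i) * cind σs f (q.1 i))) :=
          mul_le_mul_of_nonneg_left
            (Finset.sum_le_sum fun ε _ => hsplitΦ ε) (by positivity)
      _ = Kfun F hF σs q.2 + Kfun F hF σs q.1 := by
          rw [Finset.sum_add_distrib, hflipneg, mul_add]
          rfl
  -- factorization
  have hfact : ∑ q : (Fin l → X) × (Fin l → X),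
      (W q.1 * W q.2) * (Kfun F hF σs q.2 + Kfun F hF σs q.1)
      = 2 * ∑ D : Fin l → X, W D * Kfun F hF σs D := by
    rw [Fintype.sum_prod_type]
    have hinner : ∀ a : Fin l → X, ∑ b : Fin l → X,
        (W a * W b) * (Kfun F hF σs b + Kfun F hF σs a)
        = W a * (∑ b : Fin l → X, W b * Kfun F hF σs b) + W a * Kfun F hF σs a := by
      intro a
      rw [Finset.mul_sum]
      rw [show W a * Kfun F hF σs a
          = (∑ b : Fin l → X, W b) * (W a * Kfun F hF σs a) by rw [hWs, one_mul],
        Finset.sum_mul, ← Finset.sum_add_distrib]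
      apply Finset.sum_congr rfl
      intro b _
      ring
    rw [Finset.sum_congr rfl (fun a _ => hinner a), Finset.sum_add_distrib,
      ← Finset.sum_mul, hWs, one_mul]
    ring
  -- final chain
  calc ∑ D : Fin l → X, W D * phiF F hF p σs D
      ≤ ∑ D : Fin l → X, W D * (∑ D' : Fin l → X, W D' * Φ D D') := hstep2
    _ = ∑ q : (Fin l → X) × (Fin l → X), (W q.1 * W q.2) * Φ q.1 q.2 := hq
    _ = ∑ q : (Fin l → X) × (Fin l → X), (W q.1 * W q.2) *
          (((2:ℝ)^l)⁻¹ * ∑ ε : Fin l → Bool, Φg ε q.1 q.2) := havg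
    _ ≤ ∑ q : (Fin l → X) × (Fin l → X), (W q.1 * W q.2) *
          (Kfun F hF σs q.2 + Kfun F hF σs q.1) := by
        apply Finset.sum_le_sum
        intro q _
        exact mul_le_mul_of_nonneg_left (hKbound q)
          (mul_nonneg (hW0 q.1) (hW0 q.2))
    _ = 2 * ∑ D : Fin l → X, W D * Kfun F hF σs D := hfact
    _ = ∑ D : Fin l → X, W D * (2 * Kfun F hF σs D) := by
        rw [Finset.mul_sum]
        apply Finset.sum_congr rfl
        intro D _
        ring
    _ = ∑ D : Fin l → X, W D * Hfun F hF D := by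
        apply Finset.sum_congr rfl
        intro D _
        rw [two_K_eq_H F hF σs hl D]
end Sym

/-- Information-theoretic empirical Rademacher bound: with probability at least
`1 - δ` over the i.i.d. draw of `D` from `p`, every `f ∈ F` satisfies
`R(f) ≤ R(f,D,L) + [1 - 2 Σ_ε ε·2^{-ei(𝐑_{F,D},ε)}] + c₃√((1 - log₂ δ)/l)`,
with `c₃ = √(2 ln 2)`, the sum running over the image of the min-risk. -/
theorem information_theoretic_empirical_rademacher_bound
    {X : Type*} [Fintype X] [Nonempty X]
    (p : X → ℝ) (hp : ∀ x, 0 ≤ p x) (hp1 : ∑ x, p x = 1)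
    (σs : X → Bool) {l : ℕ} (hl : 1 ≤ l)
    (F : Finset (X → Bool)) (hF : F.Nonempty)
    (δ : ℝ) (hδ0 : 0 < δ) (hδ1 : δ < 1) :
    1 - δ ≤ ∑ D : Fin l → X,
      if ∀ f ∈ F,
          risk p σs f ≤ empRisk f D (fun i => σs (D i))
            + (1 - 2 * ∑ ε ∈ Finset.univ.image (minRisk F hF D),
                ε * (2 : ℝ) ^ (-(ei (minRisk F hF D) ε)))
            + Real.sqrt (2 * Real.log 2) * Real.sqrt ((1 - Real.logb 2 δ) / l)
        then ∏ i, p (D i) else 0 := by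
  classical
  have hl0 : (0:ℝ) < l := by exact_mod_cast hl
  have hlogδ : Real.logb 2 δ < 0 := Real.logb_neg (by norm_num) hδ0 hδ1
  have hinner : (0:ℝ) < (1 - Real.logb 2 δ) / l := div_pos (by linarith) hl0
  have hln2 : (0:ℝ) < Real.log 2 := Real.log_pos (by norm_num)
  set s : ℝ := Real.sqrt (2 * Real.log 2) * Real.sqrt ((1 - Real.logb 2 δ) / l) with hs
  have hs0 : (0:ℝ) < s := by
    rw [hs]
    exact mul_pos (Real.sqrt_pos.mpr (by linarith)) (Real.sqrt_pos.mpr hinner)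
  set ψ : (Fin l → X) → ℝ := fun D => phiF F hF p σs D - Hfun F hF D with hψ
  have hbd : ∀ (j : Fin l) (D : Fin l → X) (x y : X),
      ψ (Function.update D j x) - ψ (Function.update D j y) ≤ 2 / l := by
    intro j D x y
    have h1 := phiF_bdd F hF p σs hl j D x y
    have h2 := Hfun_bdd F hF hl j D y x
    have he : ψ (Function.update D j x) - ψ (Function.update D j y)
        = (phiF F hF p σs (Function.update D j x)
            - phiF F hF p σs (Function.update D j y))
          + (Hfun F hF (Function.update D j y)
            - Hfun F hF (Function.update D j x)) := by
      simp only [hψ]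
      ring
    rw [he]
    have h3 : (2:ℝ)/l = 1/l + 1/l := by ring
    linarith
  have hE : ∑ D : Fin l → X, (∏ i, p (D i)) * ψ D ≤ 0 := by
    have hsym := symmetrization F hF p σs hp hp1 hl
    have he : ∑ D : Fin l → X, (∏ i, p (D i)) * ψ D
        = (∑ D : Fin l → X, (∏ i, p (D i)) * phiF F hF p σs D)
          - (∑ D : Fin l → X, (∏ i, p (D i)) * Hfun F hF D) := by
      rw [← Finset.sum_sub_distrib]
      apply Finset.sum_congr rfl
      intro D _
      simp only [hψ]
      ring
    rw [he]
    linarith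
  have htail := mcdiarmid_tail p hp hp1 hl ψ hbd hE s hs0
  have hexp : Real.exp (-(s ^ 2 * l) / 2) ≤ δ := by
    have hs2 : s ^ 2 = (2 * Real.log 2) * ((1 - Real.logb 2 δ) / l) := by
      rw [hs, mul_pow, Real.sq_sqrt (by linarith), Real.sq_sqrt hinner.le]
    have hval : -(s ^ 2 * l) / 2 = Real.log δ - Real.log 2 := by
      rw [hs2, Real.logb]
      field_simp
      ring
    rw [hval, Real.exp_sub, Real.exp_log hδ0, Real.exp_log (by norm_num : (0:ℝ) < 2)]
    linarith
  have hWnn : ∀ D : Fin l → X, (0:ℝ) ≤ ∏ i, p (D i) := fun D => W_nonneg p hp D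
  have hpoint : ∀ D : Fin l → X,
      (∏ i, p (D i)) - (∏ i, p (D i)) * (if s ≤ ψ D then (1:ℝ) else 0)
        ≤ (if (∀ f ∈ F, risk p σs f ≤ empRisk f D (fun i => σs (D i))
            + (1 - 2 * ∑ ε ∈ Finset.univ.image (minRisk F hF D),
                ε * (2 : ℝ) ^ (-(ei (minRisk F hF D) ε))) + s)
          then ∏ i, p (D i) else 0) := by
    intro D
    by_cases hc : (∀ f ∈ F, risk p σs f ≤ empRisk f D (fun i => σs (D i))
            + (1 - 2 * ∑ ε ∈ Finset.univ.image (minRisk F hF D),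
                ε * (2 : ℝ) ^ (-(ei (minRisk F hF D) ε))) + s)
    · rw [if_pos hc]
      have h0 : (0:ℝ) ≤ (∏ i, p (D i)) * (if s ≤ ψ D then (1:ℝ) else 0) :=
        mul_nonneg (hWnn D) (by split <;> norm_num)
      linarith
    · rw [if_neg hc]
      push_neg at hc
      obtain ⟨f, hfF, hfgt⟩ := hc
      have hbr := bracket_eq_G F hF hl D
      have hHG := Hfun_le_Gfun F hF hl D
      have hφ : risk p σs f - empRisk f D (fun i => σs (D i)) ≤ phiF F hF p σs D := by
        unfold phiF
        exact Finset.le_sup'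
          (fun f => risk p σs f - empRisk f D (fun i => σs (D i))) hfF
      have hψs : s ≤ ψ D := by
        rw [hbr] at hfgt
        simp only [hψ]
        linarith
      rw [if_pos hψs]
      simp
  calc (1:ℝ) - δ ≤ 1 - Real.exp (-(s ^ 2 * l) / 2) := by linarith
    _ ≤ (∑ D : Fin l → X, ∏ i, p (D i))
        - ∑ D : Fin l → X, (∏ i, p (D i)) * (if s ≤ ψ D then (1:ℝ) else 0) := by
        rw [sum_W p hp1 l]
        linarith
    _ = ∑ D : Fin l → X, ((∏ i, p (D i))
          - (∏ i, p (D i)) * (if s ≤ ψ D then (1:ℝ) else 0)) :=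
        (Finset.sum_sub_distrib _ _).symm
    _ ≤ _ := Finset.sum_le_sum fun D _ => hpoint D
end
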